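/- arXiv:1811.09560 — 7 statements merged into one kernel-verified Lean document; each statement's English description precedes it below -/
import Mathlib

section
/- Weighted Shearer inequality: Let X_v, v ∈ V, be finitely many discrete random variables on a finite index set V, and let α_U ≥ 0 be a weight for each subset U ⊆ V. Then ∑_{U ⊆ V} α_U · H(X_U) ≥ λ · H(X_V), where λ = min_{v ∈ V} ∑_{U : v ∈ U} α_U and X_U denotes the tuple (X_v)_{v∈U}. -/
/-!
Put `F U = H(X_U)`. Then `F ∅ = 0`, `F` is monotone (a function of `Z` has at most the entropy
of `Z`) and submodular: `H(X_{U ∪ W}) + H(X_{U ∩ W}) ≤ H(X_U) + H(X_W)`, which is Gibbs'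
inequality `∑ p log (q / p) ≤ ∑ q - ∑ p` for the joint law `p` of `X_{U ∪ W}` and
`q = p_U p_W / p_{U ∩ W}`, whose total mass is at most that of `p`.

Adding the elements of `V` one at a time, the increments `d v ≥ 0` of `F` satisfy
`∑_{v ∈ V} d v = F V` and, by submodularity, `∑_{v ∈ U} d v ≤ F U` for every `U`. Hence
`λ F V = ∑_v λ d v ≤ ∑_v ∑_{U ∋ v} α_U d v = ∑_U α_U ∑_{v ∈ U} d v ≤ ∑_U α_U F U`.
-/

open MeasureTheory ProbabilityTheory Real

/-- Shannon entropy of a random variable with values in a finite set. -/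
noncomputable def entropy {Ω : Type*} [MeasurableSpace Ω] (μ : Measure Ω)
    {S : Type*} [Fintype S] (X : Ω → S) : ℝ :=
  ∑ s : S, Real.negMulLog (μ (X ⁻¹' {s})).toReal

open Finset Function

section FiberSum

variable {T A B C : Type*} [Fintype T]

def fiberSum [DecidableEq A] (f : T → A) (p : T → ℝ) (a : A) : ℝ := ∑ t with f t = a, p t

lemma negMulLog_sum_le {ι : Type*} (s : Finset ι) (p : ι → ℝ) (hp : ∀ i ∈ s, 0 ≤ p i) :
    negMulLog (∑ i ∈ s, p i) ≤ ∑ i ∈ s, negMulLog (p i) := by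
  rw [negMulLog, neg_mul, sum_mul, ← sum_neg_distrib]
  refine sum_le_sum fun i hi => ?_
  rcases (hp i hi).eq_or_lt with h0 | h0
  · simp [← h0]
  · have := log_le_log h0 (single_le_sum hp hi)
    rw [negMulLog, neg_mul]
    nlinarith

lemma mul_log_sub_log_le_sub {p q : ℝ} (hp : 0 ≤ p) (hq : 0 ≤ q) (hpq : 0 < p → 0 < q) :
    p * (log q - log p) ≤ q - p := by
  rcases hp.eq_or_lt with rfl | hp
  · simpa using hq
  have hq := hpq hp
  calc p * (log q - log p) = p * log (q / p) := by rw [log_div hq.ne' hp.ne']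
    _ ≤ p * (q / p - 1) := mul_le_mul_of_nonneg_left (log_le_sub_one_of_pos (by positivity)) hp.le
    _ = q - p := by field_simp

variable [DecidableEq A] {p : T → ℝ}

lemma le_fiberSum (hp : ∀ t, 0 ≤ p t) (f : T → A) (t : T) : p t ≤ fiberSum f p (f t) :=
  single_le_sum (fun i _ => hp i) (by simp)

lemma fiberSum_nonneg (hp : ∀ t, 0 ≤ p t) (f : T → A) (a : A) : 0 ≤ fiberSum f p a :=
  sum_nonneg fun i _ => hp i

variable [Fintype A]

lemma sum_fiberSum (f : T → A) : ∑ a, fiberSum f p a = ∑ t, p t :=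
  sum_fiberwise _ _ _

lemma fiberSum_fiberSum [DecidableEq C] (f : T → A) (r : A → C) :
    fiberSum r (fiberSum f p) = fiberSum (r ∘ f) p := by
  ext c
  simp only [fiberSum]
  rw [sum_fiberwise_eq_sum_filter]
  simp

lemma sum_negMulLog_fiberSum (f : T → A) :
    ∑ a, negMulLog (fiberSum f p a) = -∑ t, p t * log (fiberSum f p (f t)) := by
  rw [← sum_fiberwise univ f, ← sum_neg_distrib]
  refine sum_congr rfl fun a _ => ?_
  rw [negMulLog, neg_mul, fiberSum, sum_mul]
  congr 1
  exact sum_congr rfl fun t ht => by rw [(mem_filter.1 ht).2]; rfl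

lemma sum_negMulLog_fiberSum_le (hp : ∀ t, 0 ≤ p t) (f : T → A) :
    ∑ a, negMulLog (fiberSum f p a) ≤ ∑ t, negMulLog (p t) :=
  calc ∑ a, negMulLog (fiberSum f p a) ≤ ∑ a, ∑ t with f t = a, negMulLog (p t) :=
        sum_le_sum fun _ _ => negMulLog_sum_le _ _ fun t _ => hp t
    _ = ∑ t, negMulLog (p t) := sum_fiberwise _ _ _

end FiberSum

section Submodular

variable {T A B C : Type*} [Fintype T] [Fintype A] [Fintype B]
  [DecidableEq A] [DecidableEq B] [DecidableEq C]
  {p : T → ℝ} {f : T → A} {g : T → B} {rA : A → C} {rB : B → C}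

lemma sum_fiberSum_mul_fiberSum_le (hp : ∀ t, 0 ≤ p t) (hinj : Injective fun t => (f t, g t))
    (hcomm : ∀ t, rA (f t) = rB (g t)) (c : C) :
    ∑ t with rA (f t) = c, fiberSum f p (f t) * fiberSum g p (g t) ≤
      fiberSum (rA ∘ f) p c * fiberSum (rA ∘ f) p c := by
  have hcomm' : rB ∘ g = rA ∘ f := funext fun t => (hcomm t).symm
  calc ∑ t with rA (f t) = c, fiberSum f p (f t) * fiberSum g p (g t)
      = ∑ x ∈ (univ.filter fun t => rA (f t) = c).image (fun t => (f t, g t)),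
          fiberSum f p x.1 * fiberSum g p x.2 := by
        rw [sum_image fun t _ t' _ h => hinj h]
    _ ≤ ∑ x ∈ (univ.filter fun a => rA a = c) ×ˢ (univ.filter fun b => rB b = c),
          fiberSum f p x.1 * fiberSum g p x.2 := by
        refine sum_le_sum_of_subset_of_nonneg ?_ fun x _ _ =>
          mul_nonneg (fiberSum_nonneg hp f _) (fiberSum_nonneg hp g _)
        intro x hx
        obtain ⟨t, ht, rfl⟩ := mem_image.1 hx
        simp_all
    _ = fiberSum rA (fiberSum f p) c * fiberSum rB (fiberSum g p) c := by
        rw [sum_product, ← sum_mul_sum]; rfl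
    _ = _ := by rw [fiberSum_fiberSum, fiberSum_fiberSum, hcomm']

lemma sum_fiberSum_mul_fiberSum_div_le [Fintype C] (hp : ∀ t, 0 ≤ p t)
    (hinj : Injective fun t => (f t, g t)) (hcomm : ∀ t, rA (f t) = rB (g t)) :
    ∑ t, fiberSum f p (f t) * fiberSum g p (g t) / fiberSum (rA ∘ f) p (rA (f t)) ≤
      ∑ t, p t := by
  set pc := fiberSum (rA ∘ f) p
  calc _ = ∑ c, (∑ t with rA (f t) = c, fiberSum f p (f t) * fiberSum g p (g t)) / pc c := by
        rw [← sum_fiberwise univ (fun t => rA (f t))]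
        simp_rw [sum_div]
        exact sum_congr rfl fun c _ => sum_congr rfl fun t ht => by rw [(mem_filter.1 ht).2]
    _ ≤ ∑ c, pc c * pc c / pc c := sum_le_sum fun c _ =>
        div_le_div_of_nonneg_right (sum_fiberSum_mul_fiberSum_le hp hinj hcomm c)
          (fiberSum_nonneg hp _ c)
    _ = ∑ t, p t := by simp_rw [mul_self_div_self]; exact sum_fiberSum _

lemma sum_negMulLog_add_sum_negMulLog_fiberSum_le [Fintype C] (hp : ∀ t, 0 ≤ p t)
    (hinj : Injective fun t => (f t, g t)) (hcomm : ∀ t, rA (f t) = rB (g t)) :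
    ∑ t, negMulLog (p t) + ∑ c, negMulLog (fiberSum (rA ∘ f) p c) ≤
      ∑ a, negMulLog (fiberSum f p a) + ∑ b, negMulLog (fiberSum g p b) := by
  set pf := fiberSum f p
  set pg := fiberSum g p
  set pc := fiberSum (rA ∘ f) p
  have hterm : ∀ t, negMulLog (p t) - p t * log (pc (rA (f t))) ≤
      -(p t * log (pf (f t))) - p t * log (pg (g t)) +
        (pf (f t) * pg (g t) / pc (rA (f t)) - p t) := by
    intro t
    have hq : 0 ≤ pf (f t) * pg (g t) / pc (rA (f t)) :=
      div_nonneg (mul_nonneg (fiberSum_nonneg hp f _) (fiberSum_nonneg hp g _))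
        (fiberSum_nonneg hp _ _)
    rcases (hp t).eq_or_lt with h | h
    · simpa [← h] using hq
    have hf : 0 < pf (f t) := h.trans_le (le_fiberSum hp f t)
    have hg : 0 < pg (g t) := h.trans_le (le_fiberSum hp g t)
    have hc : 0 < pc (rA (f t)) := h.trans_le (le_fiberSum hp (rA ∘ f) t)
    have key := mul_log_sub_log_le_sub (hp t) hq fun _ => by positivity
    rw [log_div (by positivity) hc.ne', log_mul hf.ne' hg.ne'] at key
    rw [negMulLog]
    linarith
  have hsum := sum_le_sum fun t (_ : t ∈ univ) => hterm t
  simp only [sum_add_distrib, sum_sub_distrib, sum_neg_distrib] at hsum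
  rw [sum_negMulLog_fiberSum, sum_negMulLog_fiberSum, sum_negMulLog_fiberSum]
  have hq := sum_fiberSum_mul_fiberSum_div_le hp hinj hcomm
  simp only [comp_apply] at *
  linarith

end Submodular

section Entropy

variable {Ω T A B C : Type*} [MeasurableSpace Ω] {μ : Measure Ω} [Fintype T]

lemma entropy_of_subsingleton [IsProbabilityMeasure μ] [Subsingleton T] (Z : Ω → T) :
    entropy μ Z = 0 := by
  refine sum_eq_zero fun t _ => ?_
  rw [show Z ⁻¹' {t} = Set.univ from Set.eq_univ_of_forall fun ω => Subsingleton.elim _ _]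
  simp

variable [MeasurableSpace T] [MeasurableSingletonClass T] [IsFiniteMeasure μ] {Z : Ω → T}

lemma measureReal_comp_preimage_singleton [DecidableEq A] (hZ : Measurable Z) (f : T → A)
    (a : A) : μ.real ((f ∘ Z) ⁻¹' {a}) = fiberSum f (fun t => μ.real (Z ⁻¹' {t})) a := by
  rw [fiberSum, sum_measureReal_preimage_singleton _ fun t _ => hZ (measurableSet_singleton t)]
  congr
  ext
  simp

lemma entropy_comp [Fintype A] [DecidableEq A] (hZ : Measurable Z) (f : T → A) :
    entropy μ (f ∘ Z) = ∑ a, negMulLog (fiberSum f (fun t => μ.real (Z ⁻¹' {t})) a) := by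
  simp only [entropy, ← measureReal_def, measureReal_comp_preimage_singleton hZ]

lemma entropy_comp_le [Fintype A] (hZ : Measurable Z) (f : T → A) :
    entropy μ (f ∘ Z) ≤ entropy μ Z := by
  classical
  rw [entropy_comp hZ]
  exact sum_negMulLog_fiberSum_le (fun _ => measureReal_nonneg) f

lemma entropy_add_entropy_comp_le [Fintype A] [Fintype B] [Fintype C] (hZ : Measurable Z)
    {f : T → A} {g : T → B} {rA : A → C} {rB : B → C} (hinj : Injective fun t => (f t, g t))
    (hcomm : ∀ t, rA (f t) = rB (g t)) :
    entropy μ Z + entropy μ ((rA ∘ f) ∘ Z) ≤ entropy μ (f ∘ Z) + entropy μ (g ∘ Z) := by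
  classical
  rw [entropy_comp hZ, entropy_comp hZ, entropy_comp hZ]
  exact sum_negMulLog_add_sum_negMulLog_fiberSum_le (fun _ => measureReal_nonneg) hinj hcomm

end Entropy

section Restriction

variable {Ω V S : Type*} [MeasurableSpace Ω] {μ : Measure Ω} [IsFiniteMeasure μ]
  [DecidableEq V] [Fintype S] [MeasurableSpace S] [MeasurableSingletonClass S]
  {X : V → Ω → S}

lemma entropy_restrict_mono (hX : ∀ v, Measurable (X v)) {U W : Finset V} (h : U ⊆ W) :
    entropy μ (fun ω (v : U) => X v ω) ≤ entropy μ (fun ω (v : W) => X v ω) :=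
  entropy_comp_le (measurable_pi_lambda (fun ω (v : W) => X v ω) fun v => hX v)
    fun (x : W → S) (v : U) => x ⟨v, h v.2⟩

lemma entropy_restrict_union_add_inter_le (hX : ∀ v, Measurable (X v)) (U W : Finset V) :
    entropy μ (fun ω (v : ↥(U ∪ W)) => X v ω) + entropy μ (fun ω (v : ↥(U ∩ W)) => X v ω) ≤
      entropy μ (fun ω (v : U) => X v ω) + entropy μ (fun ω (v : W) => X v ω) := by
  refine entropy_add_entropy_comp_le
    (measurable_pi_lambda (fun ω (v : ↥(U ∪ W)) => X v ω) fun v => hX v)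
    (f := fun (x : ↥(U ∪ W) → S) (v : U) => x ⟨v, mem_union_left W v.2⟩)
    (g := fun (x : ↥(U ∪ W) → S) (v : W) => x ⟨v, mem_union_right U v.2⟩)
    (rA := fun (y : U → S) (v : ↥(U ∩ W)) => y ⟨v, (mem_inter.1 v.2).1⟩)
    (rB := fun (y : W → S) (v : ↥(U ∩ W)) => y ⟨v, (mem_inter.1 v.2).2⟩) ?_ fun _ => rfl
  intro x y h
  funext v
  rcases mem_union.1 v.2 with hv | hv
  · exact congrFun (congrArg Prod.fst h) ⟨v, hv⟩
  · exact congrFun (congrArg Prod.snd h) ⟨v, hv⟩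

lemma entropy_restrict_univ [Fintype V] (hX : ∀ v, Measurable (X v)) :
    entropy μ (fun ω (v : (univ : Finset V)) => X v ω) = entropy μ (fun ω v => X v ω) :=
  le_antisymm
    (entropy_comp_le (measurable_pi_lambda (fun ω v => X v ω) hX)
      fun (x : V → S) (v : (univ : Finset V)) => x v)
    (entropy_comp_le (measurable_pi_lambda (fun ω (v : (univ : Finset V)) => X v ω) fun v => hX v)
      fun (x : ↥(univ : Finset V) → S) v => x ⟨v, mem_univ v⟩)

end Restriction

section Shearer

variable {V : Type*} [DecidableEq V] {F : Finset V → ℝ}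

lemma exists_sum_le_of_submodular (h0 : F ∅ = 0) (hmono : Monotone F)
    (hsub : ∀ U W, F (U ∪ W) + F (U ∩ W) ≤ F U + F W) (W : Finset V) :
    ∃ d : V → ℝ, (∀ v ∈ W, 0 ≤ d v) ∧ ∑ v ∈ W, d v = F W ∧ ∀ U ⊆ W, ∑ v ∈ U, d v ≤ F U := by
  induction W using Finset.induction_on with
  | empty => exact ⟨0, by simp, by simp [h0], fun U hU => by simp [subset_empty.1 hU, h0]⟩
  | insert a W ha ih =>
    obtain ⟨d, hd0, hdW, hdU⟩ := ih
    have hW : insert a W \ {a} = W := by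
      rw [sdiff_singleton_eq_erase, erase_insert ha]
    refine ⟨update d a (F (insert a W) - F W), fun v hv => ?_, ?_, fun U hU => ?_⟩
    · rcases mem_insert.1 hv with rfl | hv
      · simpa using hmono (subset_insert v W)
      · rw [update_of_ne (ne_of_mem_of_not_mem hv ha)]
        exact hd0 v hv
    · rw [sum_update_of_mem (mem_insert_self a W), hW, hdW]
      ring
    by_cases haU : a ∈ U
    · have hsubU := hsub U W
      rw [show U ∪ W = insert a W by grind, show U ∩ W = U \ {a} by grind] at hsubU
      have hdU' := hdU (U \ {a}) (by grind)
      rw [sum_update_of_mem haU]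
      linarith
    · rw [sum_update_of_notMem haU]
      exact hdU U ((subset_insert_iff_of_notMem haU).1 hU)

lemma mul_le_sum_mul_of_submodular [Fintype V] (h0 : F ∅ = 0) (hmono : Monotone F)
    (hsub : ∀ U W, F (U ∪ W) + F (U ∩ W) ≤ F U + F W) (α : Finset V → ℝ)
    (hα : ∀ U, 0 ≤ α U) {l : ℝ} (hl : ∀ v, l ≤ ∑ U with v ∈ U, α U) :
    l * F univ ≤ ∑ U, α U * F U := by
  obtain ⟨d, hd0, hdV, hdU⟩ := exists_sum_le_of_submodular h0 hmono hsub univ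
  calc l * F univ = ∑ v, l * d v := by rw [← hdV, mul_sum]
    _ ≤ ∑ v, ∑ U with v ∈ U, α U * d v := by
        simp_rw [← sum_mul]
        exact sum_le_sum fun v _ => mul_le_mul_of_nonneg_right (hl v) (hd0 v (mem_univ v))
    _ = ∑ U, ∑ v ∈ U, α U * d v := sum_comm' fun v U => by simp
    _ ≤ ∑ U, α U * F U := by
        simp_rw [← mul_sum]
        exact sum_le_sum fun U _ => mul_le_mul_of_nonneg_left (hdU U (subset_univ U)) (hα U)

end Shearer

/-- Weighted Shearer inequality:
`∑_{U ⊆ V} α_U · H(X_U) ≥ λ · H(X_V)` where `λ = min_v ∑_{U ∋ v} α_U`. -/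
theorem stmt1 {Ω : Type*} [MeasurableSpace Ω] (μ : Measure Ω) [IsProbabilityMeasure μ]
    {V : Type*} [Fintype V] [DecidableEq V] [Nonempty V]
    {S : Type*} [Fintype S] [MeasurableSpace S] [MeasurableSingletonClass S]
    (X : V → Ω → S) (hX : ∀ v, Measurable (X v))
    (α : Finset V → ℝ) (hα : ∀ U, 0 ≤ α U) :
    ∑ U : Finset V, α U * entropy μ (fun ω => fun v : U => X v ω) ≥
      (Finset.univ.inf' Finset.univ_nonempty
          (fun v : V => ∑ U ∈ Finset.univ.filter (fun U : Finset V => v ∈ U), α U)) *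
        entropy μ (fun ω => fun v : V => X v ω) := by
  set F : Finset V → ℝ := fun U => entropy μ (fun ω (v : U) => X v ω)
  have h0 : F ∅ = 0 := entropy_of_subsingleton _
  have hmono : Monotone F := fun _ _ h => entropy_restrict_mono hX h
  have hsub : ∀ U W, F (U ∪ W) + F (U ∩ W) ≤ F U + F W :=
    entropy_restrict_union_add_inter_le hX
  rw [ge_iff_le, ← entropy_restrict_univ hX]
  exact mul_le_sum_mul_of_submodular h0 hmono hsub α hα fun v => inf'_le _ (mem_univ v)
end

section
/- Let V be a finite set, α : P(V) → [0,∞) a weight function on subsets of V, and f : V → [0,∞). Then ∑_{U ⊆ V} α_U · max_{v ∈ U} f(v) ≥ β · ∑_{v ∈ V} f(v), where β = min over nonempty W ⊆ supp(f) of (∑_{U : U ∩ W ≠ ∅} α_U) / |W|. (Equivalently, the ratio (∑_U α_U max_{v∈U} f(v)) / (∑_v f(v)) over nonnegative functions f with fixed support is minimized by an indicator function of a subset of the support.) -/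
/-!
Layer-cake induction: if `m` is the least positive value of `f` and `S` its support, then
`f = (f - m)⁺ + m • 𝟙_S` and, since truncation commutes with maxima,
`max_U f = max_U (f - m)⁺ + m • [U ∩ S ≠ ∅]`. The layer `m • 𝟙_S` contributes
`m · ∑_{U ∩ S ≠ ∅} α_U ≥ m β |S|` to the left-hand side and `m |S|` to `∑ f`, while
`(f - m)⁺` has strictly smaller support, so the claim follows by induction on the support.
-/

open Finset

lemma max_sub_zero_add_min (x m : ℝ) : max (x - m) 0 + min x m = x := by
  rcases le_total x m with h | h
  · rw [max_eq_right (by linarith), min_eq_left h, zero_add]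
  · rw [max_eq_left (by linarith), min_eq_right h, sub_add_cancel]

namespace Finset

variable {V : Type*}

noncomputable def maxOn (U : Finset V) (g : V → ℝ) : ℝ :=
  if h : U.Nonempty then U.sup' h g else 0

lemma le_maxOn {U : Finset V} {g : V → ℝ} {v : V} (hv : v ∈ U) : g v ≤ maxOn U g := by
  rw [maxOn, dif_pos ⟨v, hv⟩]
  exact le_sup' g hv

lemma maxOn_eq_zero {U : Finset V} {g : V → ℝ} (h : ∀ v ∈ U, g v = 0) : maxOn U g = 0 := by
  unfold maxOn
  split_ifs with hU
  · rw [sup'_congr hU rfl h, sup'_const]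
  · rfl

lemma maxOn_comp {φ : ℝ → ℝ} (hφ : Monotone φ) (hφ0 : φ 0 = 0) (U : Finset V) (g : V → ℝ) :
    maxOn U (fun v => φ (g v)) = φ (maxOn U g) := by
  unfold maxOn
  split_ifs with hU
  · exact (apply_sup'_eq_sup'_comp hU φ fun _ _ => hφ.map_max).symm
  · exact hφ0.symm

variable [DecidableEq V]

lemma min_maxOn_eq_ite {S U : Finset V} {g : V → ℝ} {m : ℝ} (hm : 0 ≤ m)
    (hgS : ∀ v ∈ S, m ≤ g v) (hg : ∀ v ∉ S, g v = 0) :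
    min (maxOn U g) m = if (U ∩ S).Nonempty then m else 0 := by
  split_ifs with hUS
  · obtain ⟨v, hv⟩ := hUS
    rw [mem_inter] at hv
    exact min_eq_right ((hgS v hv.2).trans (le_maxOn hv.1))
  · rw [maxOn_eq_zero fun v hv => hg v fun hvS => hUS ⟨v, mem_inter.mpr ⟨hv, hvS⟩⟩]
    exact min_eq_left hm

variable [Fintype V]

def hittingWeight (α : Finset V → ℝ) (W : Finset V) : ℝ :=
  ∑ U ∈ univ.filter (fun U : Finset V => (U ∩ W).Nonempty), α U

lemma sum_mul_maxOn_eq_truncate_add {α : Finset V → ℝ} {S : Finset V} {g : V → ℝ} {m : ℝ}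
    (hm : 0 ≤ m) (hgS : ∀ v ∈ S, m ≤ g v) (hg : ∀ v ∉ S, g v = 0) :
    ∑ U, α U * maxOn U g
      = ∑ U, α U * maxOn U (fun v => max (g v - m) 0) + m * hittingWeight α S := by
  have hsplit (U : Finset V) : maxOn U g
      = maxOn U (fun v => max (g v - m) 0) + if (U ∩ S).Nonempty then m else 0 := by
    have htrunc : maxOn U (fun v => max (g v - m) 0) = max (maxOn U g - m) 0 :=
      maxOn_comp (φ := fun x => max (x - m) 0) (fun x y hxy => by simp only; gcongr)
        (max_eq_right (by linarith)) U g
    rw [htrunc, ← min_maxOn_eq_ite hm hgS hg, max_sub_zero_add_min]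
  simp only [hsplit, mul_add, sum_add_distrib, hittingWeight, sum_filter, mul_ite, mul_zero,
    sum_mul, ite_mul, zero_mul, mul_comm m]

lemma sum_eq_sum_truncate_add {S : Finset V} {g : V → ℝ} {m : ℝ} (hm : 0 ≤ m)
    (hgS : ∀ v ∈ S, m ≤ g v) (hg : ∀ v ∉ S, g v = 0) :
    ∑ v, g v = ∑ v, max (g v - m) 0 + m * #S := by
  have hsplit (v : V) : g v = max (g v - m) 0 + if v ∈ S then m else 0 := by
    split_ifs with hv
    · rw [max_eq_left (by linarith [hgS v hv]), sub_add_cancel]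
    · rw [hg v hv, max_eq_right (by linarith), zero_add]
  rw [sum_congr rfl fun v _ => hsplit v, sum_add_distrib, sum_ite_mem, univ_inter, sum_const,
    nsmul_eq_mul, mul_comm]

lemma sInf_mul_card_le_hittingWeight {α : Finset V → ℝ} (hα : ∀ U, 0 ≤ α U) {S W : Finset V}
    (hWS : W ⊆ S) (hW : W.Nonempty) :
    sInf ((fun W => hittingWeight α W / #W) '' {W | W.Nonempty ∧ W ⊆ S}) * #W
      ≤ hittingWeight α W := by
  have hbdd : BddBelow ((fun W => hittingWeight α W / #W) '' {W | W.Nonempty ∧ W ⊆ S}) := by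
    refine ⟨0, ?_⟩
    rintro _ ⟨W, -, rfl⟩
    exact div_nonneg (sum_nonneg fun U _ => hα U) (Nat.cast_nonneg _)
  rw [← le_div_iff₀ (by exact_mod_cast hW.card_pos)]
  exact csInf_le hbdd ⟨W, ⟨hW, hWS⟩, rfl⟩

theorem mul_sum_le_sum_mul_maxOn {α : Finset V → ℝ} {β : ℝ} (S : Finset V)
    (hβ : ∀ W ⊆ S, W.Nonempty → β * #W ≤ hittingWeight α W)
    {g : V → ℝ} (hg : ∀ v, 0 ≤ g v) (hgS : ∀ v ∉ S, g v = 0) :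
    β * ∑ v, g v ≤ ∑ U, α U * maxOn U g := by
  induction S using Finset.strongInduction generalizing g with
  | H S ih =>
  set P := univ.filter fun v => 0 < g v
  have hgP : ∀ v ∉ P, g v = 0 := fun v hv => le_antisymm (by simpa [P] using hv) (hg v)
  rcases P.eq_empty_or_nonempty with hP | hP
  · have hg0 : ∀ v, g v = 0 := fun v => hgP v (by simp [hP])
    simp [hg0, maxOn_eq_zero]
  obtain ⟨v₀, hv₀, hmin⟩ := exists_mem_eq_inf' hP g
  set m := P.inf' hP g
  have hm : 0 < m := hmin ▸ (mem_filter.mp hv₀).2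
  have hmP : ∀ v ∈ P, m ≤ g v := fun v hv => inf'_le g hv
  have hPS : P ⊆ S := fun v hv => by
    by_contra hvS
    exact (mem_filter.mp hv).2.ne' (hgS v hvS)
  have htrunc : ∀ v ∉ P.erase v₀, max (g v - m) 0 = 0 := by
    intro v hv
    refine max_eq_right (sub_nonpos.mpr ?_)
    rcases eq_or_ne v v₀ with rfl | hne
    · exact hmin.ge
    · rw [hgP v fun hvP => hv (mem_erase.mpr ⟨hne, hvP⟩)]
      exact hm.le
  have hrest := ih (P.erase v₀) ((erase_ssubset hv₀).trans_subset hPS)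
    (fun W hW => hβ W (hW.trans ((erase_subset _ _).trans hPS))) (fun v => le_max_right _ _)
    htrunc
  have hlayer := mul_le_mul_of_nonneg_left (hβ P hPS hP) hm.le
  rw [sum_eq_sum_truncate_add hm.le hmP hgP, sum_mul_maxOn_eq_truncate_add hm.le hmP hgP]
  linarith

end Finset

theorem stmt2_general {V : Type*} [Fintype V] [DecidableEq V]
    (α : Finset V → ℝ) (hα : ∀ U, 0 ≤ α U)
    (f : V → ℝ) (hf : ∀ v, 0 ≤ f v)
    (supp : Finset V) (hsupp : supp = Finset.univ.filter fun v => 0 < f v)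
    (β : ℝ)
    (hβ : β = sInf ((fun W : Finset V =>
        (∑ U ∈ Finset.univ.filter (fun U : Finset V => (U ∩ W).Nonempty), α U) / W.card) ''
      {W : Finset V | W.Nonempty ∧ W ⊆ supp})) :
    ∑ U : Finset V, α U * (if h : U.Nonempty then U.sup' h f else 0) ≥ β * ∑ v, f v := by
  subst hβ
  refine mul_sum_le_sum_mul_maxOn supp
    (fun W hWS hW => sInf_mul_card_le_hittingWeight hα hWS hW) hf fun v hv => ?_
  exact le_antisymm (by simpa [hsupp] using hv) (hf v)

/-- For a weight function `α` on subsets of a finite set `V` and a nonnegative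
function `f : V → [0,∞)` with nonempty support,
`∑_{U ⊆ V} α_U · max_{v ∈ U} f(v) ≥ β · ∑_v f(v)`, where
`β = min_{∅ ≠ W ⊆ supp f} (∑_{U : U ∩ W ≠ ∅} α_U) / |W|`
(the maximum over the empty set is taken to be `0`). -/
theorem stmt2 {V : Type*} [Fintype V] [DecidableEq V]
    (α : Finset V → ℝ) (hα : ∀ U, 0 ≤ α U)
    (f : V → ℝ) (hf : ∀ v, 0 ≤ f v)
    (supp : Finset V) (hsupp : supp = Finset.univ.filter fun v => 0 < f v)
    (hne : supp.Nonempty)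
    (β : ℝ)
    (hβ : β = sInf ((fun W : Finset V =>
        (∑ U ∈ Finset.univ.filter (fun U : Finset V => (U ∩ W).Nonempty), α U) / W.card) ''
      {W : Finset V | W.Nonempty ∧ W ⊆ supp})) :
    ∑ U : Finset V, α U * (if h : U.Nonempty then U.sup' h f else 0) ≥ β * ∑ v, f v :=
  stmt2_general α hα f hf supp hsupp β hβ
end

section
/- Finite entropy inequality (hypergraph version): Let V be a finite set, E a collection of subsets (hyperedges) of V, Z_1,...,Z_m independent random variables with associated subsets W_i ⊆ V, and for each v ∈ V let X_v be a measurable function of (Z_i : v ∈ W_i), taking finitely many values. Then ∑_{e ∈ E} H(X_e) ≥ β · ∑_{v ∈ V} H(X_v), where β = min over 1 ≤ i ≤ m and nonempty W ⊆ W_i of |{e ∈ E : e ∩ W ≠ ∅}| / |W|. -/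
open MeasureTheory ProbabilityTheory Real

/-!
Induction on the number of seeds, realised on the product space `∏ᵢ ζᵢ`. Conditioning on one
seed `Z`, the induction hypothesis holds fibrewise, i.e. for the conditional entropies `H(· | Z)`;
it remains to compare the mutual informations `D_v = I(X_v; Z)` and `D_e = I(X_e; Z)`. Since `X_v`
is a function of `X_e` for `v ∈ e`, the log-sum inequality gives `0 ≤ D_v ≤ D_e`, and `D_v = 0`
unless `v ∈ W_i`, because otherwise `X_v` does not depend on `Z`. Peeling off the level sets of `D`
on `W_i` one at a time, the bound `β |W'| ≤ #{e | e ∩ W' ≠ ∅}` then yields `β ∑ D_v ≤ ∑ D_e`.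
-/

open Finset

section LogSum

variable {T U : Type*}

lemma sum_negMulLog_sub_negMulLog_sum_le (s : Finset T) {a b : T → ℝ}
    (ha : ∀ t ∈ s, 0 ≤ a t) (hb : ∀ t ∈ s, 0 ≤ b t) (hab : ∀ t ∈ s, b t = 0 → a t = 0) :
    ∑ t ∈ s, negMulLog (a t) - negMulLog (∑ t ∈ s, a t) ≤
      (∑ t ∈ s, a t) * log (∑ t ∈ s, b t) - ∑ t ∈ s, a t * log (b t) := by
  set A := ∑ t ∈ s, a t
  set B := ∑ t ∈ s, b t
  have hA : 0 ≤ A := sum_nonneg ha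
  have hterm : ∀ t ∈ s,
      negMulLog (a t) + a t * log (b t) + a t * log A - a t * log B ≤ b t * A / B - a t := by
    intro t ht
    rcases (ha t ht).eq_or_lt with h0 | hat
    · rw [← h0]
      simp only [negMulLog_zero, zero_mul, add_zero, sub_zero]
      exact div_nonneg (mul_nonneg (hb t ht) hA) (sum_nonneg hb)
    have hbt : 0 < b t := (hb t ht).lt_of_ne fun h => hat.ne' (hab t ht h.symm)
    have hA : 0 < A := hat.trans_le (single_le_sum ha ht)
    have hB : 0 < B := hbt.trans_le (single_le_sum hb ht)
    have hlog := log_le_sub_one_of_pos (show 0 < b t * A / (a t * B) by positivity)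
    rw [log_div (by positivity) (by positivity), log_mul hbt.ne' hA.ne',
      log_mul hat.ne' hB.ne'] at hlog
    have := mul_le_mul_of_nonneg_left hlog hat.le
    have hratio : a t * (b t * A / (a t * B) - 1) = b t * A / B - a t := by field_simp
    rw [negMulLog]
    linarith
  have hsum : ∑ t ∈ s, (b t * A / B - a t) ≤ 0 := by
    rw [sum_sub_distrib, ← sum_div, ← sum_mul, mul_div_right_comm, sub_nonpos]
    exact mul_le_of_le_one_left hA (div_self_le_one B)
  have := (sum_le_sum hterm).trans hsum
  simp only [sum_sub_distrib, sum_add_distrib, ← sum_mul] at this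
  rw [negMulLog]
  linarith

variable [Fintype T] [Fintype U] [DecidableEq U]

lemma sum_negMulLog_sub_sum_negMulLog_fiber_le (h : T → U) {p P : T → ℝ}
    (hp : ∀ t, 0 ≤ p t) (hP : ∀ t, 0 ≤ P t) (hpP : ∀ t, P t = 0 → p t = 0) :
    ∑ t, negMulLog (p t) - ∑ u, negMulLog (∑ t with h t = u, p t) ≤
      ∑ u, (∑ t with h t = u, p t) * log (∑ t with h t = u, P t) - ∑ t, p t * log (P t) := by
  rw [← sum_fiberwise univ h (fun t => negMulLog (p t)),
    ← sum_fiberwise univ h (fun t => p t * log (P t)), ← sum_sub_distrib, ← sum_sub_distrib]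
  exact sum_le_sum fun u _ => sum_negMulLog_sub_negMulLog_sum_le _
    (fun t _ => hp t) (fun t _ => hP t) (fun t _ => hpP t)

end LogSum

section Integral

variable {α T U : Type*} [MeasurableSpace α] [Fintype T] [Fintype U] [DecidableEq U]

lemma integrable_negMulLog_of_mem_Icc {κ : Measure α} [IsFiniteMeasure κ] {f : α → ℝ}
    (hf : Measurable f) (h0 : ∀ z, 0 ≤ f z) (h1 : ∀ z, f z ≤ 1) :
    Integrable (fun z => negMulLog (f z)) κ :=
  .of_mem_Icc 0 1 (continuous_negMulLog.measurable.comp hf).aemeasurable <| ae_of_all _ fun z =>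
    ⟨negMulLog_nonneg (h0 z) (h1 z), (negMulLog_le_one_sub_self (h0 z)).trans (by linarith [h0 z])⟩

lemma integral_sum_negMulLog_sub_le (κ : Measure α) [IsFiniteMeasure κ] (h : T → U)
    {p : T → α → ℝ} (hpm : ∀ t, Measurable (p t)) (hp0 : ∀ t z, 0 ≤ p t z)
    (hp1 : ∀ z, ∑ t, p t z ≤ 1) :
    ∫ z, (∑ t, negMulLog (p t z) - ∑ u, negMulLog (∑ t with h t = u, p t z)) ∂κ ≤
      ∑ t, negMulLog (∫ z, p t z ∂κ) - ∑ u, negMulLog (∑ t with h t = u, ∫ z, p t z ∂κ) := by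
  set P := fun t => ∫ z, p t z ∂κ
  have hle : ∀ (s : Finset T) z, ∑ t ∈ s, p t z ≤ 1 := fun s z =>
    (sum_le_univ_sum_of_nonneg (hp0 · z)).trans (hp1 z)
  have hint : ∀ t, Integrable (p t) κ := fun t =>
    .of_mem_Icc 0 1 (hpm t).aemeasurable <| ae_of_all _ fun z =>
      ⟨hp0 t z, by simpa using hle {t} z⟩
  have hintN : ∀ s : Finset T, Integrable (fun z => negMulLog (∑ t ∈ s, p t z)) κ := fun s =>
    integrable_negMulLog_of_mem_Icc (Finset.measurable_sum _ fun t _ => hpm t)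
      (fun z => sum_nonneg fun t _ => hp0 t z) (hle s)
  have hac : ∀ᵐ z ∂κ, ∀ t, P t = 0 → p t z = 0 := by
    refine ae_all_iff.2 fun t => ?_
    by_cases hPt : P t = 0
    · filter_upwards [(integral_eq_zero_iff_of_nonneg (hp0 t) (hint t)).1 hPt]
        with z hz _ using hz
    · exact ae_of_all _ fun z h => absurd h hPt
  -- the pointwise bound is a tangent bound at the mean `P`; its right side is linear in `p`
  calc ∫ z, (∑ t, negMulLog (p t z) - ∑ u, negMulLog (∑ t with h t = u, p t z)) ∂κ
      ≤ ∫ z, (∑ u, (∑ t with h t = u, p t z) * log (∑ t with h t = u, P t) -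
          ∑ t, p t z * log (P t)) ∂κ := by
        refine integral_mono_ae ?_ ?_ ?_
        · exact (integrable_finsetSum _ fun t _ => by simpa using hintN {t}).sub
            (integrable_finsetSum _ fun u _ => hintN _)
        · exact (integrable_finsetSum _ fun u _ =>
            (integrable_finsetSum _ fun t _ => hint t).mul_const _).sub
            (integrable_finsetSum _ fun t _ => (hint t).mul_const _)
        · filter_upwards [hac] with z hz
          exact sum_negMulLog_sub_sum_negMulLog_fiber_le h (hp0 · z)
            (fun t => integral_nonneg (hp0 t)) hz
    _ = ∑ u, (∑ t with h t = u, P t) * log (∑ t with h t = u, P t) - ∑ t, P t * log (P t) := by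
        rw [integral_sub (integrable_finsetSum _ fun u _ =>
            (integrable_finsetSum _ fun t _ => hint t).mul_const _)
            (integrable_finsetSum _ fun t _ => (hint t).mul_const _),
          integral_finsetSum _ fun u _ => (integrable_finsetSum _ fun t _ => hint t).mul_const _,
          integral_finsetSum _ fun t _ => (hint t).mul_const _]
        simp only [integral_mul_const, integral_finsetSum _ fun t _ => hint t, P]
    _ = _ := by
        simp only [negMulLog, neg_mul, sum_neg_distrib]
        ring

end Integral

section Entropy

variable {Ω Ω' T U : Type*} [MeasurableSpace Ω] [MeasurableSpace Ω'] [Fintype T] [Fintype U]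

lemma entropy_const (μ : Measure Ω) [IsProbabilityMeasure μ] (c : T) :
    entropy μ (fun _ => c) = 0 := by
  refine sum_eq_zero fun s _ => ?_
  by_cases h : c = s <;> simp [h]

lemma entropy_eq_zero_of_forall_eq (μ : Measure Ω) [IsProbabilityMeasure μ] {Y : Ω → T}
    (hY : ∀ ω ω', Y ω = Y ω') : entropy μ Y = 0 := by
  obtain ⟨ω₀⟩ := nonempty_of_isProbabilityMeasure μ
  rw [show Y = fun _ => Y ω₀ from funext fun ω => hY ω ω₀, entropy_const]

variable [MeasurableSpace T] [MeasurableSingletonClass T]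

lemma entropy_comp_of_measurePreserving {μ : Measure Ω} {μ' : Measure Ω'} {f : Ω → Ω'}
    (hf : MeasurePreserving f μ μ') {Y : Ω' → T} (hY : Measurable Y) :
    entropy μ (fun ω => Y (f ω)) = entropy μ' Y :=
  sum_congr rfl fun s _ => by
    rw [← hf.measure_preimage (hY (measurableSet_singleton s)).nullMeasurableSet]
    rfl

lemma sum_toReal_measure_preimage_singleton (μ : Measure Ω) [IsProbabilityMeasure μ]
    {f : Ω → T} (hf : Measurable f) : ∑ t, (μ (f ⁻¹' {t})).toReal = 1 := by
  rw [← ENNReal.toReal_sum fun _ _ => measure_ne_top _ _,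
    sum_measure_preimage_singleton _ fun t _ => hf (measurableSet_singleton t)]
  simp

lemma entropy_comp_eq_sum_fiber [DecidableEq U] (μ : Measure Ω) [IsFiniteMeasure μ]
    {f : Ω → T} (hf : Measurable f) (h : T → U) :
    entropy μ (fun ω => h (f ω)) = ∑ u, negMulLog (∑ t with h t = u, (μ (f ⁻¹' {t})).toReal) := by
  refine sum_congr rfl fun u _ => ?_
  rw [← ENNReal.toReal_sum fun _ _ => measure_ne_top _ _,
    sum_measure_preimage_singleton _ fun t _ => hf (measurableSet_singleton t)]
  congr 3
  ext
  simp

end Entropy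

section Conditioning

variable {α γ T U : Type*} [MeasurableSpace α] [MeasurableSpace γ]
  [Fintype T] [MeasurableSpace T] [MeasurableSingletonClass T] [Fintype U]

lemma measurable_entropy_section {μ' : Measure γ} [SFinite μ'] {A : α × γ → T}
    (hA : Measurable A) : Measurable fun z => entropy μ' (fun x => A (z, x)) :=
  Finset.measurable_sum _ fun t _ => continuous_negMulLog.measurable.comp
    (measurable_measure_prodMk_left (hA (measurableSet_singleton t))).ennreal_toReal

variable (κ : Measure α) [IsProbabilityMeasure κ] (μ' : Measure γ) [IsProbabilityMeasure μ']

lemma integrable_entropy_section {A : α × γ → T} (hA : Measurable A) :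
    Integrable (fun z => entropy μ' (fun x => A (z, x))) κ :=
  .of_mem_Icc 0 (Fintype.card T) (measurable_entropy_section hA).aemeasurable <|
    ae_of_all _ fun z =>
      ⟨sum_nonneg fun t _ => negMulLog_nonneg ENNReal.toReal_nonneg measureReal_le_one,
      (sum_le_sum fun t _ => (negMulLog_le_one_sub_self ENNReal.toReal_nonneg).trans
        (sub_le_self 1 ENNReal.toReal_nonneg)).trans_eq (by simp)⟩

/-- With `Z` the first coordinate, this is `H(A | h ∘ A, Z) ≤ H(A | h ∘ A)`. -/
theorem integral_entropy_sub_entropy_comp_le {A : α × γ → T} (hA : Measurable A) (h : T → U) :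
    ∫ z, (entropy μ' (fun x => A (z, x)) - entropy μ' (fun x => h (A (z, x)))) ∂κ ≤
      entropy (κ.prod μ') A - entropy (κ.prod μ') (fun w => h (A w)) := by
  classical
  set p : T → α → ℝ := fun t z => (μ' ((fun x => A (z, x)) ⁻¹' {t})).toReal
  have hpm : ∀ t, Measurable (p t) := fun t =>
    (measurable_measure_prodMk_left (hA (measurableSet_singleton t))).ennreal_toReal
  have hP : ∀ t, ((κ.prod μ') (A ⁻¹' {t})).toReal = ∫ z, p t z ∂κ := fun t => by
    rw [Measure.prod_apply (hA (measurableSet_singleton t)), ← integral_toReal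
      (measurable_measure_prodMk_left (hA (measurableSet_singleton t))).aemeasurable
      (ae_of_all _ fun _ => measure_lt_top _ _)]
    rfl
  have hsec : ∀ z, Measurable fun x => A (z, x) := fun z => hA.comp measurable_prodMk_left
  have key := integral_sum_negMulLog_sub_le κ h hpm (fun t z => ENNReal.toReal_nonneg)
    (fun z => (sum_toReal_measure_preimage_singleton μ' (hsec z)).le)
  simp only [entropy_comp_eq_sum_fiber _ (hsec _) h, entropy_comp_eq_sum_fiber _ hA h]
  simpa only [entropy, hP] using key

lemma integral_entropy_section_le {A : α × γ → T} (hA : Measurable A) :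
    ∫ z, entropy μ' (fun x => A (z, x)) ∂κ ≤ entropy (κ.prod μ') A := by
  simpa [entropy_const] using integral_entropy_sub_entropy_comp_le κ μ' hA (fun _ => ())

lemma entropy_prod_eq_integral_of_forall_snd_eq {A : α × γ → T} (hA : Measurable A)
    (hA₂ : ∀ w w' : α × γ, w.2 = w'.2 → A w = A w') :
    entropy (κ.prod μ') A = ∫ z, entropy μ' (fun x => A (z, x)) ∂κ := by
  obtain ⟨z₀⟩ := nonempty_of_isProbabilityMeasure κ
  have hsec : ∀ z, (fun x => A (z, x)) = fun x => A (z₀, x) := fun z =>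
    funext fun x => hA₂ _ _ rfl
  calc entropy (κ.prod μ') A = entropy (κ.prod μ') (fun w => A (z₀, w.2)) :=
        congrArg _ (funext fun w => hA₂ _ _ rfl)
    _ = entropy μ' (fun x => A (z₀, x)) :=
        entropy_comp_of_measurePreserving measurePreserving_snd (hA.comp measurable_prodMk_left)
    _ = ∫ z, entropy μ' (fun x => A (z, x)) ∂κ := by simp [hsec]

end Conditioning

section Combinatorics

variable {V : Type*} [Fintype V] [DecidableEq V]

theorem mul_sum_le_sum_of_le_card_filter (E' : Finset (Finset V)) {β : ℝ} (W : Finset V)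
    (hβ : ∀ W' ⊆ W, β * #W' ≤ #{e ∈ E' | (e ∩ W').Nonempty}) (a : Finset V → ℝ) (b : V → ℝ)
    (ha : ∀ e ∈ E', 0 ≤ a e) (hb : ∀ v, 0 ≤ b v) (hbW : ∀ v ∉ W, b v = 0)
    (hab : ∀ e ∈ E', ∀ v ∈ e, b v ≤ a e) :
    β * ∑ v, b v ≤ ∑ e ∈ E', a e := by
  induction W using Finset.strongInduction generalizing a b with | H W ih =>
  rcases W.eq_empty_or_nonempty with rfl | hW
  · simpa [fun v => hbW v (notMem_empty v)] using sum_nonneg ha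
  -- peel off the layer `min_W b` from `b` on `W` and from `a` on the edges meeting `W`
  obtain ⟨v₀, hv₀, hmin⟩ := W.exists_min_image b hW
  set c := b v₀
  set b' : V → ℝ := fun v => if v ∈ W then b v - c else 0
  set a' : Finset V → ℝ := fun e => if (e ∩ W).Nonempty then a e - c else a e
  have hc_le : ∀ e ∈ E', (e ∩ W).Nonempty → c ≤ a e := fun e he ⟨v, hv⟩ =>
    (hmin v (mem_inter.1 hv).2).trans (hab e he v (mem_inter.1 hv).1)
  have hIH : β * ∑ v, b' v ≤ ∑ e ∈ E', a' e := by
    refine ih (W.erase v₀) (erase_ssubset hv₀)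
      (fun W' hW' => hβ W' (hW'.trans (erase_subset _ _))) a' b'
      (fun e he => ?_) (fun v => ?_) (fun v hv => ?_) (fun e he v hv => ?_)
    · unfold a'; split_ifs with h
      · linarith [hc_le e he h]
      · exact ha e he
    · unfold b'; split_ifs with h
      · linarith [hmin v h]
      · exact le_rfl
    · unfold b'; split_ifs with h
      · simp [show v = v₀ by by_contra h'; exact hv (mem_erase.2 ⟨h', h⟩), c]
      · rfl
    · unfold a' b'; split_ifs with h₁ h₂ h₂
      · linarith [hab e he v hv]
      · exact absurd ⟨v, mem_inter.2 ⟨hv, h₁⟩⟩ h₂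
      · linarith [hc_le e he h₂]
      · exact ha e he
  have hsum_b : ∑ v, b v = ∑ v, b' v + c * #W := by
    have hsplit : ∀ v, b v = b' v + if v ∈ W then c else 0 := fun v => by
      unfold b'; split_ifs with h
      · ring
      · simp [hbW v h]
    rw [sum_congr rfl fun v _ => hsplit v, sum_add_distrib]
    simp [mul_comm]
  have hsum_a : ∑ e ∈ E', a e = ∑ e ∈ E', a' e + c * #{e ∈ E' | (e ∩ W).Nonempty} := by
    have hsplit : ∀ e, a e = a' e + if (e ∩ W).Nonempty then c else 0 := fun e => by
      unfold a'; split_ifs <;> ring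
    rw [sum_congr rfl fun e _ => hsplit e, sum_add_distrib, ← sum_filter, sum_const,
      nsmul_eq_mul, mul_comm]
  have hcW := mul_le_mul_of_nonneg_left (hβ W subset_rfl) (hb v₀)
  rw [hsum_b, hsum_a]
  linarith

end Combinatorics

section Induction

variable {V S : Type*} [Fintype V] [DecidableEq V]
  [Fintype S] [MeasurableSpace S] [MeasurableSingletonClass S] (E' : Finset (Finset V)) {β : ℝ}

theorem mul_sum_entropy_le_sum_entropy_prod {α γ : Type*} [MeasurableSpace α] [MeasurableSpace γ]
    (κ : Measure α) [IsProbabilityMeasure κ] (μ' : Measure γ) [IsProbabilityMeasure μ']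
    (W : Finset V) (hβ : ∀ W' ⊆ W, β * #W' ≤ #{e ∈ E' | (e ∩ W').Nonempty})
    {X : V → α × γ → S} (hX : ∀ v, Measurable (X v))
    (hXW : ∀ v ∉ W, ∀ w w' : α × γ, w.2 = w'.2 → X v w = X v w')
    (hsec : ∀ z, β * ∑ v, entropy μ' (fun x => X v (z, x)) ≤
      ∑ e ∈ E', entropy μ' (fun x (v : e) => X v (z, x))) :
    β * ∑ v, entropy (κ.prod μ') (X v) ≤
      ∑ e ∈ E', entropy (κ.prod μ') (fun w (v : e) => X v w) := by
  have hXe : ∀ e : Finset V, Measurable fun w (v : e) => X v w := fun e =>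
    measurable_pi_lambda _ fun v => hX v
  have hint_v : ∀ v, Integrable (fun z => entropy μ' (fun x => X v (z, x))) κ := fun v =>
    integrable_entropy_section κ μ' (hX v)
  have hint_e : ∀ e : Finset V,
      Integrable (fun z => entropy μ' (fun x (v : e) => X v (z, x))) κ := fun e =>
    integrable_entropy_section κ μ' (A := fun w (v : e) => X v w) (hXe e)
  have hcond : β * ∑ v, ∫ z, entropy μ' (fun x => X v (z, x)) ∂κ ≤
      ∑ e ∈ E', ∫ z, entropy μ' (fun x (v : e) => X v (z, x)) ∂κ := by
    rw [← integral_finsetSum _ fun v _ => hint_v v, ← integral_finsetSum _ fun e _ => hint_e e,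
      ← integral_const_mul]
    exact integral_mono ((integrable_finsetSum _ fun v _ => hint_v v).const_mul β)
      (integrable_finsetSum _ fun e _ => hint_e e) hsec
  -- the mutual informations `I(X_v; Z)` and `I(X_e; Z)` with the first coordinate `Z`
  have hinfo :
      β * ∑ v, (entropy (κ.prod μ') (X v) - ∫ z, entropy μ' (fun x => X v (z, x)) ∂κ) ≤
      ∑ e ∈ E', (entropy (κ.prod μ') (fun w (v : e) => X v w) -
        ∫ z, entropy μ' (fun x (v : e) => X v (z, x)) ∂κ) := by
    refine mul_sum_le_sum_of_le_card_filter E' W hβ _ _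
      (fun e _ => sub_nonneg.2 <|
        integral_entropy_section_le κ μ' (A := fun w (v : e) => X v w) (hXe e))
      (fun v => sub_nonneg.2 (integral_entropy_section_le κ μ' (hX v)))
      (fun v hv => sub_eq_zero.2 <|
        entropy_prod_eq_integral_of_forall_snd_eq κ μ' (hX v) (hXW v hv))
      (fun e _ v hv => ?_)
    have := integral_entropy_sub_entropy_comp_le κ μ' (hXe e) (fun f => f ⟨v, hv⟩)
    rw [integral_sub (hint_e e) (hint_v v)] at this
    linarith
  simp only [sum_sub_distrib, mul_sub] at hinfo
  linarith

lemma Fin.insertNth_eq_insertNth_of_forall {m : ℕ} {ζ : Fin (m + 1) → Type*} {l : Fin (m + 1)}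
    {P : Fin (m + 1) → Prop} {z z' : ζ l} {x x' : ∀ j, ζ (l.succAbove j)}
    (hz : P l → z = z') (hx : ∀ j, P (l.succAbove j) → x j = x' j) :
    ∀ i, P i → l.insertNth z x i = l.insertNth z' x' i := by
  intro i hi
  induction i using l.succAboveCases with
  | x => simp [hz hi]
  | p j => simp [hx j hi]

theorem mul_sum_entropy_le_sum_entropy_pi {m : ℕ} {ζ : Fin m → Type*}
    [∀ i, MeasurableSpace (ζ i)] (ν : ∀ i, Measure (ζ i)) [∀ i, IsProbabilityMeasure (ν i)]
    (W : Fin m → Finset V) (hβ : ∀ i, ∀ W' ⊆ W i, β * #W' ≤ #{e ∈ E' | (e ∩ W').Nonempty})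
    {X : V → (∀ i, ζ i) → S} (hX : ∀ v, Measurable (X v))
    (hXW : ∀ v ω ω', (∀ i, v ∈ W i → ω i = ω' i) → X v ω = X v ω') :
    β * ∑ v, entropy (Measure.pi ν) (X v) ≤
      ∑ e ∈ E', entropy (Measure.pi ν) (fun ω (v : e) => X v ω) := by
  induction m with
  | zero =>
    have hconst : ∀ v ω ω', X v ω = X v ω' := fun v ω ω' => hXW v _ _ fun i => i.elim0
    simp only [entropy_eq_zero_of_forall_eq _ (hconst _), sum_const_zero, mul_zero]
    exact sum_nonneg fun e _ => (entropy_eq_zero_of_forall_eq _ fun ω ω' =>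
      funext fun v : e => hconst v ω ω').ge
  | succ m ih =>
    let φ := MeasurableEquiv.piFinSuccAbove ζ 0
    have hφ : MeasurePreserving φ.symm
        ((ν 0).prod (Measure.pi fun j => ν (Fin.succAbove 0 j))) (Measure.pi ν) :=
      (measurePreserving_piFinSuccAbove ν 0).symm
    have key := mul_sum_entropy_le_sum_entropy_prod E' (ν 0)
      (Measure.pi fun j => ν (Fin.succAbove 0 j)) (W 0) (hβ 0)
      (X := fun v w => X v (φ.symm w)) (fun v => (hX v).comp φ.symm.measurable)
      (fun v hv w w' h => hXW v _ _ <| Fin.insertNth_eq_insertNth_of_forall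
        (fun h0 => absurd h0 hv) fun j _ => by rw [h])
      (fun z => ih (fun j => ν (Fin.succAbove 0 j)) (fun j => W (Fin.succAbove 0 j))
        (fun j => hβ _)
        (fun v => (hX v).comp (φ.symm.measurable.comp measurable_prodMk_left))
        fun v x x' h => hXW v _ _ (Fin.insertNth_eq_insertNth_of_forall (fun _ => rfl) h))
    have hv : ∀ v, entropy _ (fun w => X v (φ.symm w)) = entropy (Measure.pi ν) (X v) :=
      fun v => entropy_comp_of_measurePreserving hφ (hX v)
    have he : ∀ e : Finset V, entropy _ (fun w (v : e) => X v (φ.symm w)) =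
        entropy (Measure.pi ν) (fun ω (v : e) => X v ω) := fun e =>
      entropy_comp_of_measurePreserving hφ (Y := fun ω (v : e) => X v ω)
        (measurable_pi_lambda _ fun v => hX v)
    simpa only [hv, he] using key

end Induction

lemma sInf_mul_card_le_card_filter {V : Type*} [DecidableEq V] (E' : Finset (Finset V))
    {m : ℕ} (W : Fin m → Finset V) (i : Fin m) {W' : Finset V} (hW' : W' ⊆ W i) :
    sInf {r : ℝ | ∃ (i : Fin m) (Wsub : Finset V), Wsub.Nonempty ∧ Wsub ⊆ W i ∧
      r = ((E'.filter fun e => (e ∩ Wsub).Nonempty).card : ℝ) / Wsub.card} * #W' ≤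
      #{e ∈ E' | (e ∩ W').Nonempty} := by
  rcases W'.eq_empty_or_nonempty with rfl | hne
  · simp
  have hcard : (0 : ℝ) < #W' := by exact_mod_cast hne.card_pos
  rw [← le_div_iff₀ hcard]
  refine csInf_le ⟨0, ?_⟩ ⟨i, W', hne, hW', rfl⟩
  rintro r ⟨_, _, _, _, rfl⟩
  positivity

/-- Finite entropy inequality, hypergraph version: if each `X_v` is a measurable function of
the independent seeds `(Z_i : v ∈ W_i)`, then for any collection `E'` of hyperedges,
`∑_{e ∈ E'} H(X_e) ≥ β ∑_v H(X_v)`, where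
`β = min_{i, ∅ ≠ W ⊆ W_i} |{e ∈ E' : e ∩ W ≠ ∅}| / |W|`. -/
theorem stmt5 {Ω : Type*} [MeasurableSpace Ω] (μ : Measure Ω) [IsProbabilityMeasure μ]
    {V : Type*} [Fintype V] [DecidableEq V]
    {S : Type*} [Fintype S] [MeasurableSpace S] [MeasurableSingletonClass S]
    (E' : Finset (Finset V))
    {m : ℕ} {ζ : Fin m → Type*} [∀ i, MeasurableSpace (ζ i)]
    (Z : ∀ i, Ω → ζ i) (hZmeas : ∀ i, Measurable (Z i))
    (hZindep : ProbabilityTheory.iIndepFun Z μ)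
    (W : Fin m → Finset V)
    (X : V → Ω → S)
    (hX : ∀ v, ∃ g : (∀ i : {i : Fin m // v ∈ W i}, ζ i) → S,
      Measurable g ∧ X v = fun ω => g (fun i => Z i ω))
    (β : ℝ)
    (hβ : β = sInf {r : ℝ | ∃ (i : Fin m) (Wsub : Finset V), Wsub.Nonempty ∧ Wsub ⊆ W i ∧
      r = ((E'.filter fun e => (e ∩ Wsub).Nonempty).card : ℝ) / Wsub.card}) :
    ∑ e ∈ E', entropy μ (fun ω => fun v : e => X v ω) ≥
      β * ∑ v : V, entropy μ (X v) := by
  choose g hgm hgX using hX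
  have hZ : MeasurePreserving (fun ω i => Z i ω) μ (Measure.pi fun i => μ.map (Z i)) :=
    ⟨measurable_pi_lambda _ hZmeas, hZindep.map_fun_eq_pi_map fun i => (hZmeas i).aemeasurable⟩
  set Y : V → (∀ i, ζ i) → S := fun v ω => g v fun i => ω i.1
  have hY : ∀ v, Measurable (Y v) := fun v =>
    (hgm v).comp (measurable_pi_lambda _ fun i => measurable_pi_apply i.1)
  have hv : ∀ v, entropy μ (X v) = entropy _ (Y v) := fun v => by
    rw [hgX v]; exact entropy_comp_of_measurePreserving hZ (hY v)
  have he : ∀ e : Finset V, entropy μ (fun ω (v : e) => X v ω) =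
      entropy _ (fun ω (v : e) => Y v ω) := fun e => by
    simp only [hgX]
    exact entropy_comp_of_measurePreserving hZ (Y := fun ω (v : e) => Y v ω)
      (measurable_pi_lambda _ fun v => hY v)
  have := fun i => Measure.isProbabilityMeasure_map (μ := μ) (hZmeas i).aemeasurable
  rw [ge_iff_le]
  simp only [hv, he]
  exact mul_sum_entropy_le_sum_entropy_pi E' _ W
    (fun i W' hW' => hβ ▸ sInf_mul_card_le_card_filter E' W i hW')
    hY fun v ω ω' h => congrArg (g v) (funext fun i => h i.1 i.2)
end

section
/- The function φ(q) = (−2q·log q − (1−2q)·log(1−2q)) / (−q·log q − (1−q)·log(1−q)) − 1 is continuous and strictly monotone decreasing on (0, 1/2), with lim_{q→0+} φ(q) = 1 and lim_{q→1/2−} φ(q) = 0; hence φ maps (0,1/2) bijectively onto (0,1). -/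
/-- The function `φ(q) = (−2q log q − (1−2q)log(1−2q))/(−q log q − (1−q)log(1−q)) − 1`. -/
noncomputable def phi (q : ℝ) : ℝ :=
  (-2 * q * Real.log q - (1 - 2 * q) * Real.log (1 - 2 * q)) /
      (-q * Real.log q - (1 - q) * Real.log (1 - q)) - 1

/-!
Write `φ = ternaryEntropy / binEntropy - 1`, where `ternaryEntropy q` is the entropy of the
distribution `(q, q, 1 - 2q)`.
Near `0` both entropies are dominated by `-q log q`, with coefficients `2` and `1`, so `φ → 1`;
at `q = 1/2` both equal `log 2`, so `φ → 0`. The sign of `φ'` reduces to the inequality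
`log (1 - 2q) ≤ 2 log (1 - q)`, i.e. `1 - 2q ≤ (1 - q)²`. A continuous strictly decreasing function
on an open interval maps it onto the open interval between its one-sided limits.
-/

open Real Filter Set Topology

section IntervalLimits

variable {α β : Type*} [TopologicalSpace α] [TopologicalSpace β] [LinearOrder β]
  [OrderClosedTopology β] {f : α → β} {a b : α} {la lb : β}

theorem StrictAntiOn.mapsTo_Ioo_of_tendsto [LinearOrder α] [OrderTopology α] [DenselyOrdered α]
    (hf : StrictAntiOn f (Ioo a b)) (ha : Tendsto f (𝓝[>] a) (𝓝 la))
    (hb : Tendsto f (𝓝[<] b) (𝓝 lb)) : MapsTo f (Ioo a b) (Ioo lb la) := by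
  intro x hx
  obtain ⟨y, hay, hyx⟩ := exists_between hx.1
  obtain ⟨z, hxz, hzb⟩ := exists_between hx.2
  have : NeBot (𝓝[>] a) := nhdsGT_neBot_of_exists_gt ⟨y, hay⟩
  have : NeBot (𝓝[<] b) := nhdsLT_neBot_of_exists_lt ⟨z, hzb⟩
  have hy : y ∈ Ioo a b := ⟨hay, hyx.trans hx.2⟩
  have hz : z ∈ Ioo a b := ⟨hx.1.trans hxz, hzb⟩
  have hlb : lb ≤ f z := le_of_tendsto hb <| by
    filter_upwards [Ioo_mem_nhdsLT hzb] with w hw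
    exact (hf hz ⟨hz.1.trans hw.1, hw.2⟩ hw.1).le
  have hla : f y ≤ la := ge_of_tendsto ha <| by
    filter_upwards [Ioo_mem_nhdsGT hay] with w hw
    exact (hf ⟨hw.1, hw.2.trans hy.2⟩ hy hw.2).le
  exact ⟨hlb.trans_lt (hf hx hz hxz), (hf hy hx hyx).trans_le hla⟩

theorem ContinuousOn.surjOn_Ioo_of_tendsto [ConditionallyCompleteLinearOrder α] [OrderTopology α]
    [DenselyOrdered α] (hab : a < b) (hf : ContinuousOn f (Ioo a b))
    (ha : Tendsto f (𝓝[>] a) (𝓝 la)) (hb : Tendsto f (𝓝[<] b) (𝓝 lb)) :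
    SurjOn f (Ioo a b) (Ioo lb la) := by
  intro y hy
  have : NeBot (𝓝[>] a) := nhdsGT_neBot_of_exists_gt ⟨b, hab⟩
  have : NeBot (𝓝[<] b) := nhdsLT_neBot_of_exists_lt ⟨a, hab⟩
  obtain ⟨x₁, hx₁, hfx₁⟩ :=
    ((eventually_mem_set.2 (Ioo_mem_nhdsGT hab)).and (ha.eventually_const_lt hy.2)).exists
  obtain ⟨x₂, hx₂, hfx₂⟩ :=
    ((eventually_mem_set.2 (Ioo_mem_nhdsLT hab)).and (hb.eventually_lt_const hy.1)).exists
  exact hf.surjOn_uIcc hx₁ hx₂ (mem_uIcc.2 (Or.inr ⟨hfx₂.le, hfx₁.le⟩))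

end IntervalLimits

noncomputable def ternaryEntropy (q : ℝ) : ℝ := 2 * negMulLog q + negMulLog (1 - 2 * q)

lemma phi_eq : phi = fun q => ternaryEntropy q / binEntropy q - 1 := by
  ext q
  simp only [phi, ternaryEntropy, binEntropy_eq_negMulLog_add_negMulLog_one_sub, negMulLog]
  congr 2 <;> ring

lemma continuous_ternaryEntropy : Continuous ternaryEntropy := by
  unfold ternaryEntropy; fun_prop

lemma hasDerivAt_ternaryEntropy {q : ℝ} (h₀ : q ≠ 0) (h₁ : 1 - 2 * q ≠ 0) :
    HasDerivAt ternaryEntropy (2 * log (1 - 2 * q) - 2 * log q) q := by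
  have hlin : HasDerivAt (fun x : ℝ => 1 - 2 * x) (-2) q := by
    simpa using ((hasDerivAt_id q).const_mul 2).const_sub 1
  have h := ((hasDerivAt_negMulLog h₀).const_mul 2).add ((hasDerivAt_negMulLog h₁).comp q hlin)
  exact h.congr_deriv (by ring)

lemma continuousOn_phi : ContinuousOn phi (Ioo 0 1) := by
  rw [phi_eq]
  exact (continuous_ternaryEntropy.continuousOn.div binEntropy_continuous.continuousOn
    fun q hq => (binEntropy_pos hq.1 hq.2).ne').sub continuousOn_const

lemma log_one_sub_two_mul_le {q : ℝ} (hq : q < 1 / 2) : log (1 - 2 * q) ≤ 2 * log (1 - q) := by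
  calc log (1 - 2 * q) ≤ log ((1 - q) ^ 2) := log_le_log (by linarith) (by nlinarith [sq_nonneg q])
    _ = 2 * log (1 - q) := by rw [log_pow]; norm_num

lemma hasDerivAt_phi {q : ℝ} (h₀ : 0 < q) (h₁ : q < 1 / 2) :
    HasDerivAt phi (((2 * log (1 - 2 * q) - 2 * log q) * binEntropy q
      - ternaryEntropy q * (log (1 - q) - log q)) / binEntropy q ^ 2) q := by
  rw [phi_eq]
  exact ((hasDerivAt_ternaryEntropy h₀.ne' (by linarith)).div
    (hasDerivAt_binEntropy h₀.ne' (by linarith)) (binEntropy_pos h₀ (by linarith)).ne').sub_const 1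

lemma strictAntiOn_phi : StrictAntiOn phi (Ioo 0 (1 / 2)) := by
  refine strictAntiOn_of_deriv_neg (convex_Ioo 0 (1 / 2))
    (continuousOn_phi.mono (Ioo_subset_Ioo_right (by norm_num))) fun q hq => ?_
  rw [interior_Ioo] at hq
  obtain ⟨h₀, h₁⟩ := hq
  have hH : 0 < binEntropy q := binEntropy_pos h₀ (by linarith)
  rw [(hasDerivAt_phi h₀ h₁).deriv]
  refine div_neg_of_neg_of_pos ?_ (pow_pos hH 2)
  have hL₀ : log q < 0 := log_neg h₀ (by linarith)
  have hL₁ : log (1 - q) < 0 := log_neg (by linarith) (by linarith)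
  have hL₂ := log_one_sub_two_mul_le h₁
  -- The numerator equals `-(L₀L₂ + L₁L₂ - 2L₀L₁)` for `L₀ = log q`, `Lᵢ = log (1 - i q)`,
  -- which is negative because `L₀ < 0` and `L₂ ≤ 2L₁ < 0`.
  simp only [ternaryEntropy, binEntropy_eq_negMulLog_add_negMulLog_one_sub, negMulLog]
  nlinarith [mul_nonneg (neg_nonneg.2 hL₀.le) (sub_nonneg.2 hL₂), mul_pos_of_neg_of_neg hL₁ hL₁]

lemma tendsto_negMulLog_one_sub_mul_div_negMulLog (c : ℝ) :
    Tendsto (fun q => negMulLog (1 - c * q) / negMulLog q) (𝓝[>] 0) (𝓝 0) := by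
  have hslope : Tendsto (fun q => log (1 - c * q) / q) (𝓝[>] 0) (𝓝 (-c)) := by
    have hd : HasDerivAt (fun x => log (1 - c * x)) (-c) 0 := by
      have := ((hasDerivAt_id (0 : ℝ)).const_mul c).const_sub 1
      simpa [Function.comp_def] using
        (hasDerivAt_log (by simp : (1 : ℝ) - c * id 0 ≠ 0)).comp 0 this
    refine ((hasDerivAt_iff_tendsto_slope_zero.1 hd).mono_left
      (nhdsWithin_mono _ fun x hx => ne_of_gt hx)).congr fun q => ?_
    simp [div_eq_inv_mul]
  have hlog : Tendsto (fun q => (log q)⁻¹) (𝓝[>] 0) (𝓝 0) :=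
    tendsto_log_nhdsGT_zero.inv_tendsto_atBot
  have hone : Tendsto (fun q : ℝ => 1 - c * q) (𝓝[>] 0) (𝓝 1) :=
    ((by fun_prop : Continuous fun q : ℝ => 1 - c * q).tendsto' 0 1 (by simp)).mono_left
      nhdsWithin_le_nhds
  have := (hone.mul hslope).mul hlog
  rw [mul_zero] at this
  refine this.congr fun q => ?_
  simp only [negMulLog]
  ring

lemma tendsto_phi_nhdsGT_zero : Tendsto phi (𝓝[>] 0) (𝓝 1) := by
  have hlim := ((tendsto_const_nhds (x := (2 : ℝ))).add
    (tendsto_negMulLog_one_sub_mul_div_negMulLog 2)).div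
    ((tendsto_const_nhds (x := (1 : ℝ))).add (tendsto_negMulLog_one_sub_mul_div_negMulLog 1))
    (by norm_num) |>.sub_const 1
  rw [show ((2 : ℝ) + 0) / (1 + 0) - 1 = 1 by norm_num] at hlim
  refine hlim.congr' ?_
  filter_upwards [Ioo_mem_nhdsGT one_pos] with q hq
  have hq₀ : negMulLog q ≠ 0 := by
    rw [negMulLog_eq_neg]; exact neg_ne_zero.2 (mul_log_neg hq.1 hq.2).ne
  simp only [phi_eq, ternaryEntropy, binEntropy_eq_negMulLog_add_negMulLog_one_sub, Pi.div_apply,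
    one_mul]
  field_simp

lemma phi_half : phi (1 / 2) = 0 := by
  have hT : ternaryEntropy 2⁻¹ = log 2 := by simp [ternaryEntropy, negMulLog]
  simp only [phi_eq, one_div, hT, binEntropy_two_inv, div_self (log_pos one_lt_two).ne', sub_self]

lemma tendsto_phi_nhdsLT_half : Tendsto phi (𝓝[<] (1 / 2)) (𝓝 0) :=
  phi_half ▸ (continuousOn_phi.continuousAt (Ioo_mem_nhds (by norm_num) (by norm_num))).tendsto
    |>.mono_left nhdsWithin_le_nhds

/-- `φ` is continuous and strictly monotone decreasing on `(0, 1/2)`, with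
`lim_{q→0+} φ(q) = 1` and `lim_{q→1/2−} φ(q) = 0`; hence it maps `(0,1/2)` bijectively
onto `(0,1)`. -/
theorem stmt10 :
    ContinuousOn phi (Set.Ioo 0 (1 / 2)) ∧
      StrictAntiOn phi (Set.Ioo 0 (1 / 2)) ∧
      Filter.Tendsto phi (nhdsWithin 0 (Set.Ioi 0)) (nhds 1) ∧
      Filter.Tendsto phi (nhdsWithin (1 / 2) (Set.Iio (1 / 2))) (nhds 0) ∧
      Set.BijOn phi (Set.Ioo 0 (1 / 2)) (Set.Ioo 0 1) := by
  have hcont : ContinuousOn phi (Ioo 0 (1 / 2)) :=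
    continuousOn_phi.mono (Ioo_subset_Ioo_right (by norm_num))
  refine ⟨hcont, strictAntiOn_phi, tendsto_phi_nhdsGT_zero, tendsto_phi_nhdsLT_half, ?_⟩
  exact ⟨strictAntiOn_phi.mapsTo_Ioo_of_tendsto tendsto_phi_nhdsGT_zero tendsto_phi_nhdsLT_half,
    strictAntiOn_phi.injOn,
    hcont.surjOn_Ioo_of_tendsto (by norm_num) tendsto_phi_nhdsGT_zero tendsto_phi_nhdsLT_half⟩
end

section
/- Asymptotics of φ near 0: φ(q) = 1 + q/log q + O(q/(log q)^2) as q → 0+, where φ(q) = (−2q·log q − (1−2q)·log(1−2q)) / (−q·log q − (1−q)·log(1−q)) − 1. -/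
open Asymptotics

open Real Filter Topology

/-! With `h(x) = (1 - x) log (1 - x) = -x + x²/2 + O(x³)`, the numerator and denominator of `φ + 1`
are `-2q log q - h(2q)` and `D(q) = -q log q - h(q)`. The linear terms cancel in
`2h(q) - h(2q) = -q² + O(q³)`, and clearing denominators gives
`φ - 1 - q / log q = (log q · (2h(q) - h(2q) + q²) + q h(q)) / (log q · D(q))`.
The numerator is `O(q²)` because `q log q` is bounded, and `D(q) ≥ q |log q| / 2` once `log q ≤ -2`. -/

lemma abs_one_sub_mul_log_one_sub_le {x : ℝ} (hx0 : 0 ≤ x) (hx1 : x < 1) :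
    |(1 - x) * log (1 - x)| ≤ x := by
  have hpos : 0 < 1 - x := by linarith
  have hlog_nonpos : log (1 - x) ≤ 0 := log_nonpos hpos.le (by linarith)
  have hlog_ge : 1 - (1 - x)⁻¹ ≤ log (1 - x) := one_sub_inv_le_log_of_pos hpos
  have : -x ≤ (1 - x) * log (1 - x) := by
    have := mul_le_mul_of_nonneg_left hlog_ge hpos.le
    rwa [mul_sub, mul_one, mul_inv_cancel₀ hpos.ne', sub_sub_cancel_left] at this
  rw [abs_of_nonpos (mul_nonpos_of_nonneg_of_nonpos hpos.le hlog_nonpos)]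
  linarith

lemma abs_one_sub_mul_log_one_sub_add_sub_le {x : ℝ} (hx : |x| ≤ 1 / 2) :
    |(1 - x) * log (1 - x) + x - x ^ 2 / 2| ≤ 4 * |x| ^ 3 := by
  have htaylor : |log (1 - x) + x + x ^ 2 / 2| ≤ 2 * |x| ^ 3 := by
    have h := abs_log_sub_add_sum_range_le (show |x| < 1 by linarith) 2
    simp only [Finset.sum_range_succ, Finset.sum_range_zero] at h
    norm_num at h
    calc |log (1 - x) + x + x ^ 2 / 2| = |x + x ^ 2 / 2 + log (1 - x)| := by ring_nf
      _ ≤ |x| ^ 3 / (1 - |x|) := h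
      _ ≤ 2 * |x| ^ 3 := by
        rw [div_le_iff₀ (by linarith)]
        nlinarith [pow_nonneg (abs_nonneg x) 3]
  have h1x : |1 - x| ≤ 3 / 2 := by
    rw [abs_le] at hx ⊢
    constructor <;> linarith
  calc |(1 - x) * log (1 - x) + x - x ^ 2 / 2|
      = |(1 - x) * (log (1 - x) + x + x ^ 2 / 2) + x ^ 3 / 2| := by ring_nf
    _ ≤ |1 - x| * |log (1 - x) + x + x ^ 2 / 2| + |x| ^ 3 / 2 := by
      grw [abs_add_le, abs_mul, abs_div, abs_pow, abs_two]
    _ ≤ 3 / 2 * (2 * |x| ^ 3) + |x| ^ 3 / 2 := by gcongr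
    _ ≤ 4 * |x| ^ 3 := by nlinarith [pow_nonneg (abs_nonneg x) 3]

lemma abs_two_mul_one_sub_mul_log_one_sub_sub_add_sq_le {q : ℝ} (hq0 : 0 ≤ q) (hq : q ≤ 1 / 4) :
    |2 * ((1 - q) * log (1 - q)) - (1 - 2 * q) * log (1 - 2 * q) + q ^ 2| ≤ 40 * q ^ 3 := by
  have h1 := abs_one_sub_mul_log_one_sub_add_sub_le (x := q) (by rw [abs_of_nonneg hq0]; linarith)
  have h2 := abs_one_sub_mul_log_one_sub_add_sub_le (x := 2 * q)
    (by rw [abs_of_nonneg (by linarith)]; linarith)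
  rw [abs_of_nonneg hq0] at h1
  rw [abs_of_nonneg (show 0 ≤ 2 * q by linarith)] at h2
  calc |2 * ((1 - q) * log (1 - q)) - (1 - 2 * q) * log (1 - 2 * q) + q ^ 2|
      = |2 * ((1 - q) * log (1 - q) + q - q ^ 2 / 2)
          - ((1 - 2 * q) * log (1 - 2 * q) + 2 * q - (2 * q) ^ 2 / 2)| := by ring_nf
    _ ≤ 2 * (4 * q ^ 3) + 4 * (2 * q) ^ 3 := by
      grw [abs_sub, abs_mul, abs_two, h1, h2]
    _ = 40 * q ^ 3 := by ring

lemma abs_phi_sub_le {q : ℝ} (hq0 : 0 < q) (hq : q ≤ 1 / 4) (hlog : log q ≤ -2) :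
    |phi q - (1 + q / log q)| ≤ 82 * (q / log q ^ 2) := by
  set L := log q
  set h₁ := (1 - q) * log (1 - q)
  set h₂ := (1 - 2 * q) * log (1 - 2 * q)
  set D := -q * L - h₁
  have hL : L ≠ 0 := by linarith
  have hh₁ : |h₁| ≤ q := abs_one_sub_mul_log_one_sub_le hq0.le (by linarith)
  have hD : q * |L| / 2 ≤ D := by
    rw [abs_of_neg (by linarith)]
    nlinarith [(abs_le.mp hh₁).2]
  have hD0 : 0 < D := lt_of_lt_of_le (by positivity) hD
  have hqL : |L * q| ≤ 1 := (abs_log_mul_self_lt q hq0 (by linarith)).le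
  have hE : |L * (2 * h₁ - h₂ + q ^ 2) + q * h₁| ≤ 41 * q ^ 2 := by
    have hcancel := abs_two_mul_one_sub_mul_log_one_sub_sub_add_sq_le hq0.le hq
    calc |L * (2 * h₁ - h₂ + q ^ 2) + q * h₁|
        ≤ |L| * (40 * q ^ 3) + q * q := by
          grw [abs_add_le, abs_mul, abs_mul, hcancel, hh₁, abs_of_pos hq0]
      _ = 40 * q ^ 2 * |L * q| + q ^ 2 := by rw [abs_mul, abs_of_pos hq0]; ring
      _ ≤ 41 * q ^ 2 := by nlinarith
  have heq : phi q - (1 + q / L) = (L * (2 * h₁ - h₂ + q ^ 2) + q * h₁) / (L * D) := by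
    have hphi : phi q = (-2 * q * L - h₂) / D - 1 := rfl
    rw [hphi]
    field_simp
    ring
  rw [heq, abs_div, abs_mul, abs_of_pos hD0, div_le_iff₀ (by positivity)]
  calc |L * (2 * h₁ - h₂ + q ^ 2) + q * h₁| ≤ 41 * q ^ 2 := hE
    _ = 82 * (q / L ^ 2) * (|L| * (q * |L| / 2)) := by
      rw [← sq_abs L]
      field_simp
      norm_num
    _ ≤ 82 * (q / L ^ 2) * (|L| * D) := by gcongr

/-- Asymptotics of `φ` near `0`: `φ(q) = 1 + q/log q + O(q/(log q)²)` as `q → 0+`. -/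
theorem stmt11 :
    (fun q : ℝ => phi q - (1 + q / Real.log q)) =O[nhdsWithin 0 (Set.Ioi 0)]
      (fun q : ℝ => q / (Real.log q) ^ 2) := by
  refine IsBigO.of_bound 82 ?_
  filter_upwards [Ioo_mem_nhdsGT (show (0 : ℝ) < 1 / 4 by norm_num),
    tendsto_log_nhdsGT_zero.eventually_le_atBot (-2)] with q ⟨hq0, hq⟩ hlog
  rw [norm_eq_abs, norm_of_nonneg (by positivity)]
  exact abs_phi_sub_le hq0 hq.le hlog
end

section
/- Asymptotics of φ near 1/2: φ(1/2 − t) = (−2t·log t)/log 2 + O(t) as t → 0+, where φ(q) = (−2q·log q − (1−2q)·log(1−2q)) / (−q·log q − (1−q)·log(1−q)) − 1. -/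
/-!
Put `q = 1/2 - t`. Using `log (1/2 ∓ t) = log (1 ∓ 2t) - log 2` and `log (2t) = log 2 + log t`,
the denominator `D` of `φ` becomes `log 2` minus a function that is smooth and vanishes at `t = 0`,
and `N - D`, with `N` the numerator, becomes `-2t log t` plus such a function and a multiple of `t`.
So `D = log 2 + O(t)` and `N - D = -2t log t + O(t)`; as `t log t` stays bounded, this gives
`N / D - 1 = -2t log t / log 2 + O(t)`.
-/

open Asymptotics

open Filter Topology Real

theorem isBigO_div_sub_one_sub_div {α 𝕜 : Type*} [NormedField 𝕜] {l : Filter α}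
    {N D a : α → 𝕜} {g : α → ℝ} {L : 𝕜} (hL : L ≠ 0) (hg : Tendsto g l (𝓝 0))
    (ha : a =O[l] fun _ => (1 : ℝ)) (hD : (fun x => D x - L) =O[l] g)
    (hN : (fun x => N x - D x - a x) =O[l] g) :
    (fun x => N x / D x - 1 - a x / L) =O[l] g := by
  have hDL : Tendsto D l (𝓝 L) := tendsto_sub_nhds_zero_iff.mp (hD.trans_tendsto hg)
  have hDinv : (fun x => (D x)⁻¹) =O[l] fun _ => (1 : ℝ) := (hDL.inv₀ hL).isBigO_one ℝ
  have hsplit : (fun x => (N x - D x - a x) * (D x)⁻¹ - L⁻¹ * (a x * (D x - L) * (D x)⁻¹))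
      =ᶠ[l] fun x => N x / D x - 1 - a x / L := by
    filter_upwards [hDL.eventually_ne hL] with x hx
    field_simp
    ring
  have hmain : (fun x => (N x - D x - a x) * (D x)⁻¹) =O[l] g := by
    simpa using hN.mul hDinv
  have hcorr : (fun x => a x * (D x - L) * (D x)⁻¹) =O[l] g := by
    simpa using (ha.mul hD).mul hDinv
  exact (hmain.sub (hcorr.const_mul_left L⁻¹)).congr' hsplit EventuallyEq.rfl

theorem DifferentiableAt.isBigO_self_of_apply_zero {𝕜 E : Type*} [NontriviallyNormedField 𝕜]
    [NormedAddCommGroup E] [NormedSpace 𝕜 E] {f : 𝕜 → E} (hf : DifferentiableAt 𝕜 f 0)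
    (h₀ : f 0 = 0) : f =O[𝓝 0] fun t => t := by
  simpa [h₀] using hf.isBigO_sub

theorem entropy_half_sub_sub_log_two {t : ℝ} (h₁ : 1 - 2 * t ≠ 0) (h₂ : 1 + 2 * t ≠ 0) :
    -(1 / 2 - t) * log (1 / 2 - t) - (1 - (1 / 2 - t)) * log (1 - (1 / 2 - t)) - log 2
      = -((1 / 2 - t) * log (1 - 2 * t) + (1 / 2 + t) * log (1 + 2 * t)) := by
  rw [show (1 : ℝ) / 2 - t = (1 - 2 * t) / 2 by ring,
    show 1 - (1 - 2 * t) / 2 = (1 + 2 * t) / 2 by ring, log_div h₁ two_ne_zero,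
    log_div h₂ two_ne_zero]
  ring

theorem phi_numerator_sub_entropy_half_sub {t : ℝ} (h₀ : t ≠ 0) (h₁ : 1 - 2 * t ≠ 0)
    (h₂ : 1 + 2 * t ≠ 0) :
    -2 * (1 / 2 - t) * log (1 / 2 - t) - (1 - 2 * (1 / 2 - t)) * log (1 - 2 * (1 / 2 - t))
        - (-(1 / 2 - t) * log (1 / 2 - t) - (1 - (1 / 2 - t)) * log (1 - (1 / 2 - t)))
        - -2 * t * log t
      = -4 * log 2 * t + ((1 / 2 + t) * log (1 + 2 * t) - (1 / 2 - t) * log (1 - 2 * t)) := by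
  rw [show (1 : ℝ) / 2 - t = (1 - 2 * t) / 2 by ring,
    show 1 - (1 - 2 * t) / 2 = (1 + 2 * t) / 2 by ring,
    show 1 - 2 * ((1 - 2 * t) / 2) = 2 * t by ring, log_div h₁ two_ne_zero,
    log_div h₂ two_ne_zero, log_mul two_ne_zero h₀]
  ring

/-- Asymptotics of `φ` near `1/2`: `φ(1/2 − t) = (−2t log t)/log 2 + O(t)` as `t → 0+`. -/
theorem stmt12 :
    (fun t : ℝ => phi (1 / 2 - t) - (-2 * t * Real.log t) / Real.log 2)
      =O[nhdsWithin 0 (Set.Ioi 0)] (fun t : ℝ => t) := by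
  have hlogs : ∀ᶠ t in 𝓝[>] (0 : ℝ), t ≠ 0 ∧ 1 - 2 * t ≠ 0 ∧ 1 + 2 * t ≠ 0 := by
    filter_upwards [Ioo_mem_nhdsGT (show (0 : ℝ) < 1 / 2 by norm_num)] with t ⟨h₀, h₁⟩
    refine ⟨h₀.ne', ?_, ?_⟩ <;> linarith
  have hs : (fun t : ℝ => (1 / 2 - t) * log (1 - 2 * t) + (1 / 2 + t) * log (1 + 2 * t))
      =O[𝓝 0] fun t => t :=
    DifferentiableAt.isBigO_self_of_apply_zero (by fun_prop (disch := norm_num)) (by simp)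
  have hr : (fun t : ℝ => (1 / 2 + t) * log (1 + 2 * t) - (1 / 2 - t) * log (1 - 2 * t))
      =O[𝓝 0] fun t => t :=
    DifferentiableAt.isBigO_self_of_apply_zero (by fun_prop (disch := norm_num)) (by simp)
  unfold phi
  refine isBigO_div_sub_one_sub_div (log_pos one_lt_two).ne'
    (tendsto_id.mono_left nhdsWithin_le_nhds) ?_ ?_ ?_
  · exact ((continuous_mul_log.const_mul (-2)).tendsto 0).mono_left nhdsWithin_le_nhds
      |>.isBigO_one ℝ |>.congr_left fun t => by ring
  · refine (hs.neg_left.mono nhdsWithin_le_nhds).congr' ?_ EventuallyEq.rfl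
    filter_upwards [hlogs] with t ⟨_, h₁, h₂⟩
    exact (entropy_half_sub_sub_log_two h₁ h₂).symm
  · refine ((((isBigO_refl _ _).const_mul_left (-4 * log 2)).add hr).mono
      nhdsWithin_le_nhds).congr' ?_ EventuallyEq.rfl
    filter_upwards [hlogs] with t ⟨h₀, h₁, h₂⟩
    exact (phi_numerator_sub_entropy_half_sub h₀ h₁ h₂).symm
end

section
/- Let μ be a probability measure on ℝ × ℝ (all relevant second moments finite), with marginals μ1, μ2. Define Δ_{a,b}(μ) = a·(Var(μ1) + Var(μ2)) + b·Cov(μ), where Cov(μ) = ∫ xy dμ − (∫ x dμ1)(∫ y dμ2). Then the functions μ ↦ Δ_{a,b}(μ) − Var(μ1) and μ ↦ Δ_{a,b}(μ) − Var(μ2) are both concave (with respect to convex combinations of measures) if and only if a ≥ 1 and |b| ≤ 2√(a(a−1)). -/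
/-!
Every quantity entering `Δ_{a,b}` is an integral or a product of two integrals, so along the
mixture `t μ + (1 - t) ν` each of `var1`, `var2`, `covM` is affine in `t` up to a correction
`t (1 - t)` times a product of two differences of means (`xμ - xν`, `yμ - yν`). Hence the concavity defect
of `Δ_{a,b} - var1` is `t (1 - t) q(xμ - xν, yμ - yν)` for the quadratic form
`q(X, Y) = (a - 1) X² + b X Y + a Y²` (with the roles of `X` and `Y` exchanged for `var2`). Mixing
two Dirac masses realises every pair of mean differences, so both functionals are concave iff `q`
is positive semidefinite, which is the discriminant condition `a ≥ 1`, `b² ≤ 4 a (a - 1)`.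
-/

open MeasureTheory

/-- Variance of the first coordinate under a measure on `ℝ × ℝ`. -/
noncomputable def var1 (μ : Measure (ℝ × ℝ)) : ℝ :=
  (∫ p, p.1 ^ 2 ∂μ) - (∫ p, p.1 ∂μ) ^ 2

/-- Variance of the second coordinate under a measure on `ℝ × ℝ`. -/
noncomputable def var2 (μ : Measure (ℝ × ℝ)) : ℝ :=
  (∫ p, p.2 ^ 2 ∂μ) - (∫ p, p.2 ∂μ) ^ 2

/-- Covariance of the coordinates under a measure on `ℝ × ℝ`. -/
noncomputable def covM (μ : Measure (ℝ × ℝ)) : ℝ :=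
  (∫ p, p.1 * p.2 ∂μ) - (∫ p, p.1 ∂μ) * (∫ p, p.2 ∂μ)

/-- `Δ_{a,b}(μ) = a·(Var(μ₁) + Var(μ₂)) + b·Cov(μ)`. -/
noncomputable def deltaAB (a b : ℝ) (μ : Measure (ℝ × ℝ)) : ℝ :=
  a * (var1 μ + var2 μ) + b * covM μ

/-- Probability measures on `ℝ × ℝ` with finite second moments. -/
def FinMom (μ : Measure (ℝ × ℝ)) : Prop :=
  IsProbabilityMeasure μ ∧ Integrable (fun p => p.1 ^ 2) μ ∧ Integrable (fun p => p.2 ^ 2) μ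

open Set

local notation "mix[" t ", " μ ", " ν "]" => ENNReal.ofReal t • μ + ENNReal.ofReal (1 - t) • ν

section Mixture

variable {α : Type*} [MeasurableSpace α] {μ ν : Measure α} {t : ℝ}

theorem integral_mix (ht : t ∈ Icc (0 : ℝ) 1) {f : α → ℝ} (hμ : Integrable f μ)
    (hν : Integrable f ν) :
    ∫ x, f x ∂mix[t, μ, ν] = t * ∫ x, f x ∂μ + (1 - t) * ∫ x, f x ∂ν := by
  rw [integral_add_measure (hμ.smul_measure ENNReal.ofReal_ne_top)
      (hν.smul_measure ENNReal.ofReal_ne_top), integral_smul_measure, integral_smul_measure,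
    ENNReal.toReal_ofReal ht.1, ENNReal.toReal_ofReal (sub_nonneg.2 ht.2), smul_eq_mul,
    smul_eq_mul]

theorem integral_mul_sub_mul_integral_mix (ht : t ∈ Icc (0 : ℝ) 1) {f g : α → ℝ}
    (hfμ : Integrable f μ) (hfν : Integrable f ν) (hgμ : Integrable g μ)
    (hgν : Integrable g ν) (hfgμ : Integrable (fun x => f x * g x) μ)
    (hfgν : Integrable (fun x => f x * g x) ν) :
    (∫ x, f x * g x ∂mix[t, μ, ν]) - (∫ x, f x ∂mix[t, μ, ν]) * ∫ x, g x ∂mix[t, μ, ν] =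
      t * ((∫ x, f x * g x ∂μ) - (∫ x, f x ∂μ) * ∫ x, g x ∂μ) +
        (1 - t) * ((∫ x, f x * g x ∂ν) - (∫ x, f x ∂ν) * ∫ x, g x ∂ν) +
        t * (1 - t) * ((∫ x, f x ∂μ) - ∫ x, f x ∂ν) * ((∫ x, g x ∂μ) - ∫ x, g x ∂ν) := by
  rw [integral_mix ht hfgμ hfgν, integral_mix ht hfμ hfν, integral_mix ht hgμ hgν]
  ring

end Mixture

namespace FinMom

variable {μ : Measure (ℝ × ℝ)}

theorem memLp_fst (h : FinMom μ) : MemLp (fun p : ℝ × ℝ => p.1) 2 μ :=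
  (memLp_two_iff_integrable_sq measurable_fst.aestronglyMeasurable).2 h.2.1

theorem memLp_snd (h : FinMom μ) : MemLp (fun p : ℝ × ℝ => p.2) 2 μ :=
  (memLp_two_iff_integrable_sq measurable_snd.aestronglyMeasurable).2 h.2.2

theorem integrable_fst (h : FinMom μ) : Integrable (fun p : ℝ × ℝ => p.1) μ :=
  haveI := h.1; h.memLp_fst.integrable one_le_two

theorem integrable_snd (h : FinMom μ) : Integrable (fun p : ℝ × ℝ => p.2) μ :=
  haveI := h.1; h.memLp_snd.integrable one_le_two

theorem integrable_fst_mul_snd (h : FinMom μ) : Integrable (fun p : ℝ × ℝ => p.1 * p.2) μ :=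
  h.memLp_fst.integrable_mul h.memLp_snd

theorem integrable_fst_mul_fst (h : FinMom μ) : Integrable (fun p : ℝ × ℝ => p.1 * p.1) μ :=
  h.memLp_fst.integrable_mul h.memLp_fst

theorem integrable_snd_mul_snd (h : FinMom μ) : Integrable (fun p : ℝ × ℝ => p.2 * p.2) μ :=
  h.memLp_snd.integrable_mul h.memLp_snd

theorem dirac (p : ℝ × ℝ) : FinMom (Measure.dirac p) :=
  ⟨inferInstance, integrable_dirac enorm_lt_top, integrable_dirac enorm_lt_top⟩

end FinMom

section Moments

variable {μ ν : Measure (ℝ × ℝ)} {t : ℝ}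

theorem var1_mix (hμ : FinMom μ) (hν : FinMom ν) (ht : t ∈ Icc (0 : ℝ) 1) :
    var1 mix[t, μ, ν] = t * var1 μ + (1 - t) * var1 ν +
      t * (1 - t) * ((∫ p, p.1 ∂μ) - ∫ p, p.1 ∂ν) ^ 2 := by
  simp only [var1, sq]
  linear_combination integral_mul_sub_mul_integral_mix ht hμ.integrable_fst hν.integrable_fst
    hμ.integrable_fst hν.integrable_fst hμ.integrable_fst_mul_fst hν.integrable_fst_mul_fst

theorem var2_mix (hμ : FinMom μ) (hν : FinMom ν) (ht : t ∈ Icc (0 : ℝ) 1) :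
    var2 mix[t, μ, ν] = t * var2 μ + (1 - t) * var2 ν +
      t * (1 - t) * ((∫ p, p.2 ∂μ) - ∫ p, p.2 ∂ν) ^ 2 := by
  simp only [var2, sq]
  linear_combination integral_mul_sub_mul_integral_mix ht hμ.integrable_snd hν.integrable_snd
    hμ.integrable_snd hν.integrable_snd hμ.integrable_snd_mul_snd hν.integrable_snd_mul_snd

theorem covM_mix (hμ : FinMom μ) (hν : FinMom ν) (ht : t ∈ Icc (0 : ℝ) 1) :
    covM mix[t, μ, ν] = t * covM μ + (1 - t) * covM ν +
      t * (1 - t) * ((∫ p, p.1 ∂μ) - ∫ p, p.1 ∂ν) * ((∫ p, p.2 ∂μ) - ∫ p, p.2 ∂ν) :=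
  integral_mul_sub_mul_integral_mix ht hμ.integrable_fst hν.integrable_fst
    hμ.integrable_snd hν.integrable_snd hμ.integrable_fst_mul_snd hν.integrable_fst_mul_snd

def defectForm (a b X Y : ℝ) : ℝ := (a - 1) * X ^ 2 + b * (X * Y) + a * Y ^ 2

theorem deltaAB_sub_var1_mix (a b : ℝ) (hμ : FinMom μ) (hν : FinMom ν)
    (ht : t ∈ Icc (0 : ℝ) 1) :
    deltaAB a b mix[t, μ, ν] - var1 mix[t, μ, ν] =
      t * (deltaAB a b μ - var1 μ) + (1 - t) * (deltaAB a b ν - var1 ν) +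
        t * (1 - t) *
          defectForm a b ((∫ p, p.1 ∂μ) - ∫ p, p.1 ∂ν) ((∫ p, p.2 ∂μ) - ∫ p, p.2 ∂ν) := by
  simp only [deltaAB, defectForm, var1_mix hμ hν ht, var2_mix hμ hν ht, covM_mix hμ hν ht]
  ring

theorem deltaAB_sub_var2_mix (a b : ℝ) (hμ : FinMom μ) (hν : FinMom ν)
    (ht : t ∈ Icc (0 : ℝ) 1) :
    deltaAB a b mix[t, μ, ν] - var2 mix[t, μ, ν] =
      t * (deltaAB a b μ - var2 μ) + (1 - t) * (deltaAB a b ν - var2 ν) +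
        t * (1 - t) *
          defectForm a b ((∫ p, p.2 ∂μ) - ∫ p, p.2 ∂ν) ((∫ p, p.1 ∂μ) - ∫ p, p.1 ∂ν) := by
  simp only [deltaAB, defectForm, var1_mix hμ hν ht, var2_mix hμ hν ht, covM_mix hμ hν ht]
  ring

end Moments

def ConcaveAlongMixtures (F : Measure (ℝ × ℝ) → ℝ) : Prop :=
  ∀ μ ν : Measure (ℝ × ℝ), FinMom μ → FinMom ν → ∀ t ∈ Icc (0 : ℝ) 1,
    F mix[t, μ, ν] ≥ t * F μ + (1 - t) * F ν

theorem concaveAlongMixtures_iff {F : Measure (ℝ × ℝ) → ℝ} {g : ℝ → ℝ → ℝ}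
    (hF : ∀ μ ν : Measure (ℝ × ℝ), FinMom μ → FinMom ν → ∀ t ∈ Icc (0 : ℝ) 1,
      F mix[t, μ, ν] = t * F μ + (1 - t) * F ν +
        t * (1 - t) * g ((∫ p, p.1 ∂μ) - ∫ p, p.1 ∂ν) ((∫ p, p.2 ∂μ) - ∫ p, p.2 ∂ν)) :
    ConcaveAlongMixtures F ↔ ∀ X Y, 0 ≤ g X Y := by
  constructor
  · intro hconc X Y
    have hdefect := hF _ _ (.dirac (X, Y)) (.dirac 0) (1 / 2) (by norm_num)
    have := hconc _ _ (.dirac (X, Y)) (.dirac 0) (1 / 2) (by norm_num)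
    simp only [integral_dirac, Prod.fst_zero, Prod.snd_zero, sub_zero] at hdefect
    linarith
  · intro hg μ ν hμ hν t ht
    rw [hF μ ν hμ hν t ht, ge_iff_le, le_add_iff_nonneg_right]
    exact mul_nonneg (mul_nonneg ht.1 (sub_nonneg.2 ht.2)) (hg _ _)

theorem abs_le_two_mul_sqrt_iff {b c : ℝ} (hc : 0 ≤ c) : |b| ≤ 2 * √c ↔ b ^ 2 ≤ 4 * c := by
  rw [← sq_le_sq₀ (abs_nonneg b) (by positivity), sq_abs, mul_pow, Real.sq_sqrt hc]
  norm_num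

theorem defectForm_nonneg_iff (a b : ℝ) :
    (∀ X Y, 0 ≤ defectForm a b X Y) ↔ 1 ≤ a ∧ |b| ≤ 2 * √(a * (a - 1)) := by
  constructor
  · intro h
    have ha : 1 ≤ a := by simpa [defectForm] using h 1 0
    have hdiscr : discrim (a - 1) b a ≤ 0 :=
      discrim_le_zero fun X => by simpa [defectForm, sq] using h X 1
    refine ⟨ha, (abs_le_two_mul_sqrt_iff (by nlinarith)).2 ?_⟩
    rw [discrim] at hdiscr
    linarith
  · rintro ⟨ha, hb⟩ X Y
    rw [abs_le_two_mul_sqrt_iff (by nlinarith)] at hb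
    have hsq : 4 * a * defectForm a b X Y =
        (2 * a * Y + b * X) ^ 2 + (4 * (a * (a - 1)) - b ^ 2) * X ^ 2 := by
      unfold defectForm
      ring
    refine (mul_nonneg_iff_of_pos_left (by linarith : (0 : ℝ) < 4 * a)).1 ?_
    rw [hsq]
    exact add_nonneg (sq_nonneg _) (mul_nonneg (sub_nonneg.2 hb) (sq_nonneg X))

/-- `Δ_{a,b} − Var∘π₁` and `Δ_{a,b} − Var∘π₂` are both concave with respect to convex
combinations of probability measures with finite second moments if and only if
`a ≥ 1` and `|b| ≤ 2√(a(a−1))`. -/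
theorem stmt13 (a b : ℝ) :
    ((∀ μ ν : Measure (ℝ × ℝ), FinMom μ → FinMom ν → ∀ t : ℝ, t ∈ Set.Icc (0 : ℝ) 1 →
        deltaAB a b (ENNReal.ofReal t • μ + ENNReal.ofReal (1 - t) • ν) -
            var1 (ENNReal.ofReal t • μ + ENNReal.ofReal (1 - t) • ν) ≥
          t * (deltaAB a b μ - var1 μ) + (1 - t) * (deltaAB a b ν - var1 ν)) ∧
      (∀ μ ν : Measure (ℝ × ℝ), FinMom μ → FinMom ν → ∀ t : ℝ, t ∈ Set.Icc (0 : ℝ) 1 →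
        deltaAB a b (ENNReal.ofReal t • μ + ENNReal.ofReal (1 - t) • ν) -
            var2 (ENNReal.ofReal t • μ + ENNReal.ofReal (1 - t) • ν) ≥
          t * (deltaAB a b μ - var2 μ) + (1 - t) * (deltaAB a b ν - var2 ν)))
      ↔ (1 ≤ a ∧ |b| ≤ 2 * Real.sqrt (a * (a - 1))) := by
  have h1 := concaveAlongMixtures_iff (F := fun μ => deltaAB a b μ - var1 μ)
    fun _ _ hμ hν _ ht => deltaAB_sub_var1_mix a b hμ hν ht
  have h2 := concaveAlongMixtures_iff (F := fun μ => deltaAB a b μ - var2 μ)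
    (g := fun X Y => defectForm a b Y X) fun _ _ hμ hν _ ht => deltaAB_sub_var2_mix a b hμ hν ht
  refine (and_congr h1 h2).trans ?_
  rw [and_iff_left_of_imp fun h X Y => h Y X]
  exact defectForm_nonneg_iff a b
end
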